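/- arXiv:2103.06471 — 6 statements merged into one kernel-verified Lean document; each statement's English description precedes it below -/
import Mathlib

section
/- Suppose |Yᵢ| ≤ k₁ almost surely for all i, and 1/pᵢ(e) ≤ k₂ for the exposure e. Then for units i ≠ j with P(dᵢ = e, dⱼ = e) > 0, Cov(1{dᵢ=e}εᵢ, 1{dⱼ=e}εⱼ) / (pᵢ(e)pⱼ(e)) ≤ 4k₁²k₂²·|Cov(1{dᵢ=e}, 1{dⱼ=e})| + ε̃ᵢⱼ(e,e)·ε̃ⱼᵢ(e,e) + Cov(ε̇ᵢⱼ, ε̇ⱼᵢ | dᵢ = e, dⱼ = e). -/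
open MeasureTheory ProbabilityTheory Real Finset

/-- Covariance of two real random variables under a measure `P`. -/
noncomputable def cov {Ω : Type*} [MeasurableSpace Ω] (P : MeasureTheory.Measure Ω)
    (X Y : Ω → ℝ) : ℝ :=
  (∫ ω, X ω * Y ω ∂P) - (∫ ω, X ω ∂P) * ∫ ω, Y ω ∂P

/-- Covariance of two real random variables under the conditional measure `P(·|A)`. -/
noncomputable def condCov {Ω : Type*} [MeasurableSpace Ω] (P : MeasureTheory.Measure Ω)
    (A : Set Ω) (X Y : Ω → ℝ) : ℝ :=
  (∫ ω, X ω * Y ω ∂(P[|A])) - (∫ ω, X ω ∂(P[|A])) * ∫ ω, Y ω ∂(P[|A])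

/-!
Because `ȳᵢ(e)` is the mean of `Yᵢ` on `{dᵢ = e}`, the variable `1{dᵢ=e} εᵢ` is centred, so the
covariance on the left is `q · M` with `q = P(dᵢ = e, dⱼ = e)` and
`M = E[(Yᵢ - ȳᵢ(e)) (Yⱼ - ȳⱼ(e)) | dᵢ = e, dⱼ = e]`. Expanding around the conditional means
`μ̄ᵢⱼ(e,e)`, `μ̄ⱼᵢ(e,e)` gives `M = ε̃ᵢⱼ ε̃ⱼᵢ + Cov(ε̇ᵢⱼ, ε̇ⱼᵢ | dᵢ = e, dⱼ = e)`. Finally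
`q M / (pᵢ pⱼ) = M + (q - pᵢ pⱼ) M / (pᵢ pⱼ)`, where `q - pᵢ pⱼ` is the covariance of the two
indicators, `|M| ≤ 4 k₁²` and `1 / (pᵢ pⱼ) ≤ k₂²`.
-/

section Covariance

variable {Ω : Type*} [MeasurableSpace Ω] {μ : Measure Ω} {X Z X' Z' : Ω → ℝ}

lemma cov_congr_ae (hX : X =ᵐ[μ] X') (hZ : Z =ᵐ[μ] Z') : cov μ X Z = cov μ X' Z' := by
  have hXZ : (fun ω => X ω * Z ω) =ᵐ[μ] fun ω => X' ω * Z' ω := hX.mul hZ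
  rw [cov, cov, integral_congr_ae hX, integral_congr_ae hZ, integral_congr_ae hXZ]

lemma cov_indicator_one_indicator_one {s t : Set Ω} (hs : MeasurableSet s) (ht : MeasurableSet t) :
    cov μ (s.indicator 1) (t.indicator 1) = μ.real (s ∩ t) - μ.real s * μ.real t := by
  rw [cov, integral_indicator_one hs, integral_indicator_one ht,
    ← integral_indicator_one (hs.inter ht), Set.inter_indicator_one]
  rfl

variable [IsProbabilityMeasure μ]

lemma integral_sub_mul_sub_eq_cov_add (hX : Integrable X μ) (hZ : Integrable Z μ)
    (hXZ : Integrable (fun ω => X ω * Z ω) μ) (a b : ℝ) :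
    ∫ ω, (X ω - a) * (Z ω - b) ∂μ = cov μ X Z + (∫ ω, X ω ∂μ - a) * (∫ ω, Z ω ∂μ - b) := by
  have hexpand : (fun ω => (X ω - a) * (Z ω - b))
      = fun ω => X ω * Z ω - (b * X ω + (a * Z ω - a * b)) := by
    funext ω; ring
  rw [hexpand, integral_sub hXZ (by fun_prop), integral_add (by fun_prop) (by fun_prop),
    integral_sub (by fun_prop) (by fun_prop), integral_const_mul, integral_const_mul,
    integral_const, cov]
  simp only [probReal_univ, smul_eq_mul, one_mul]
  ring

lemma cov_sub_const_sub_const (hX : Integrable X μ) (hZ : Integrable Z μ)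
    (hXZ : Integrable (fun ω => X ω * Z ω) μ) (a b : ℝ) :
    cov μ (fun ω => X ω - a) (fun ω => Z ω - b) = cov μ X Z := by
  rw [cov, integral_sub_mul_sub_eq_cov_add hX hZ hXZ, integral_sub hX (integrable_const a),
    integral_sub hZ (integrable_const b), integral_const, integral_const]
  simp

lemma integrable_of_ae_abs_le {k : ℝ} (hX : AEStronglyMeasurable X μ)
    (h : ∀ᵐ ω ∂μ, |X ω| ≤ k) : Integrable X μ :=
  .of_bound hX k (by simpa using h)

lemma abs_integral_le_of_ae_abs_le {k : ℝ} (h : ∀ᵐ ω ∂μ, |X ω| ≤ k) : |∫ ω, X ω ∂μ| ≤ k := by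
  simpa using norm_integral_le_of_norm_le_const (μ := μ) (f := X) (C := k) (by simpa using h)

lemma abs_integral_sub_mul_sub_le {k a b : ℝ} (hX : ∀ᵐ ω ∂μ, |X ω| ≤ k)
    (hZ : ∀ᵐ ω ∂μ, |Z ω| ≤ k) (ha : |a| ≤ k) (hb : |b| ≤ k) :
    |∫ ω, (X ω - a) * (Z ω - b) ∂μ| ≤ 4 * k ^ 2 := by
  refine abs_integral_le_of_ae_abs_le ?_
  filter_upwards [hX, hZ] with ω hXω hZω
  have hXa : |X ω - a| ≤ 2 * k := (abs_sub _ _).trans (by linarith)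
  have hZb : |Z ω - b| ≤ 2 * k := (abs_sub _ _).trans (by linarith)
  rw [abs_mul]
  nlinarith [abs_nonneg (X ω - a), abs_nonneg (Z ω - b)]

end Covariance

section Conditioning

variable {Ω : Type*} [MeasurableSpace Ω] {μ : Measure Ω} {s t : Set Ω}

lemma condCov_eq_cov (X Z : Ω → ℝ) : condCov μ s X Z = cov μ[|s] X Z := rfl

lemma integral_cond_eq_setAverage (f : Ω → ℝ) (s : Set Ω) :
    ∫ ω, f ω ∂μ[|s] = ⨍ ω in s, f ω ∂μ := by
  rw [setAverage_eq']
  rfl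

lemma ae_cond_of_ae {p : Ω → Prop} (h : ∀ᵐ ω ∂μ, p ω) : ∀ᵐ ω ∂μ[|s], p ω :=
  cond_absolutelyContinuous.ae_le h

variable [IsFiniteMeasure μ]

lemma integral_indicator_sub_integral_cond (hs : MeasurableSet s) (X : Ω → ℝ) :
    ∫ ω, s.indicator (fun ω => X ω - ∫ ω, X ω ∂μ[|s]) ω ∂μ = 0 := by
  rw [integral_indicator hs, integral_cond_eq_setAverage]
  exact setAverage_sub_setAverage (measure_ne_top μ s) X

lemma setIntegral_eq_measureReal_mul_integral_cond (s : Set Ω) (f : Ω → ℝ) :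
    ∫ ω in s, f ω ∂μ = μ.real s * ∫ ω, f ω ∂μ[|s] := by
  rw [integral_cond_eq_setAverage, ← smul_eq_mul, measure_smul_setAverage f (measure_ne_top μ s)]

lemma cov_indicator_sub_integral_cond (hs : MeasurableSet s) (ht : MeasurableSet t)
    (X Z : Ω → ℝ) :
    cov μ (s.indicator fun ω => X ω - ∫ ω, X ω ∂μ[|s])
        (t.indicator fun ω => Z ω - ∫ ω, Z ω ∂μ[|t])
      = μ.real (s ∩ t)
          * ∫ ω, (X ω - ∫ ω, X ω ∂μ[|s]) * (Z ω - ∫ ω, Z ω ∂μ[|t]) ∂μ[|s ∩ t] := by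
  simp_rw [cov, integral_indicator_sub_integral_cond hs, zero_mul, sub_zero,
    ← Set.inter_indicator_mul, integral_indicator (hs.inter ht)]
  exact setIntegral_eq_measureReal_mul_integral_cond _ _

lemma condCov_eq_cov_cond_of_eqOn_sub_const {X Z X' Z' : Ω → ℝ} {k a b : ℝ}
    (hs : MeasurableSet s) (hμs : μ s ≠ 0)
    (hX : AEStronglyMeasurable X μ) (hZ : AEStronglyMeasurable Z μ)
    (hXk : ∀ᵐ ω ∂μ, |X ω| ≤ k) (hZk : ∀ᵐ ω ∂μ, |Z ω| ≤ k)
    (hX' : ∀ ω ∈ s, X' ω = X ω - a) (hZ' : ∀ ω ∈ s, Z' ω = Z ω - b) :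
    condCov μ s X' Z' = cov μ[|s] X Z := by
  have : IsProbabilityMeasure μ[|s] := cond_isProbabilityMeasure hμs
  have hXs : ∀ᵐ ω ∂μ[|s], |X ω| ≤ k := ae_cond_of_ae hXk
  have hZs : ∀ᵐ ω ∂μ[|s], |Z ω| ≤ k := ae_cond_of_ae hZk
  have hXint := integrable_of_ae_abs_le (hX.mono_ac cond_absolutelyContinuous) hXs
  have hZint := integrable_of_ae_abs_le (hZ.mono_ac cond_absolutelyContinuous) hZs
  rw [condCov_eq_cov, cov_congr_ae (ae_cond_of_forall_mem hs hX') (ae_cond_of_forall_mem hs hZ'),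
    cov_sub_const_sub_const hXint hZint
      (hZint.bdd_mul hXint.aestronglyMeasurable (by simpa using hXs))]

end Conditioning

lemma mul_div_le_mul_abs_sub_add {q a b M K k : ℝ} (ha : 0 < a) (hb : 0 < b)
    (hka : 1 / a ≤ k) (hkb : 1 / b ≤ k) (hM : |M| ≤ K) :
    q * M / (a * b) ≤ K * k ^ 2 * |q - a * b| + M := by
  have hab : 0 < a * b := mul_pos ha hb
  have hinv : 1 / (a * b) ≤ k ^ 2 := by
    rw [← one_div_mul_one_div, sq]
    exact mul_le_mul hka hkb (by positivity) ((one_div_pos.2 ha).le.trans hka)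
  have hdev : (q - a * b) * M ≤ K * |q - a * b| := by
    calc (q - a * b) * M ≤ |q - a * b| * |M| := by rw [← abs_mul]; exact le_abs_self _
      _ ≤ K * |q - a * b| := by rw [mul_comm K]; gcongr
  have hK : 0 ≤ K * |q - a * b| := mul_nonneg ((abs_nonneg M).trans hM) (abs_nonneg _)
  calc q * M / (a * b) = (q - a * b) * M * (1 / (a * b)) + M := by field_simp; ring
    _ ≤ K * |q - a * b| * k ^ 2 + M := by
      gcongr ?_ + M
      exact (mul_le_mul_of_nonneg_right hdev (by positivity)).trans
        (mul_le_mul_of_nonneg_left hinv hK)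
    _ = K * k ^ 2 * |q - a * b| + M := by ring

lemma cov_indicator_centered_div_le {Ω : Type*} [MeasurableSpace Ω] {P : Measure Ω}
    [IsProbabilityMeasure P] {s t : Set Ω} {X Z : Ω → ℝ} {k k' : ℝ}
    (hs : MeasurableSet s) (ht : MeasurableSet t) (hst : P (s ∩ t) ≠ 0)
    (hX : AEStronglyMeasurable X P) (hZ : AEStronglyMeasurable Z P)
    (hXk : ∀ᵐ ω ∂P, |X ω| ≤ k) (hZk : ∀ᵐ ω ∂P, |Z ω| ≤ k)
    (hsk : 1 / P.real s ≤ k') (htk : 1 / P.real t ≤ k') :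
    cov P (s.indicator fun ω => X ω - ∫ ω, X ω ∂P[|s])
        (t.indicator fun ω => Z ω - ∫ ω, Z ω ∂P[|t]) / (P.real s * P.real t)
      ≤ 4 * k ^ 2 * k' ^ 2 * |cov P (s.indicator 1) (t.indicator 1)|
        + (∫ ω, X ω ∂P[|s ∩ t] - ∫ ω, X ω ∂P[|s]) * (∫ ω, Z ω ∂P[|s ∩ t] - ∫ ω, Z ω ∂P[|t])
        + cov P[|s ∩ t] X Z := by
  have hs0 : P s ≠ 0 := fun h => hst (measure_mono_null Set.inter_subset_left h)
  have ht0 : P t ≠ 0 := fun h => hst (measure_mono_null Set.inter_subset_right h)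
  have : IsProbabilityMeasure P[|s] := cond_isProbabilityMeasure hs0
  have : IsProbabilityMeasure P[|t] := cond_isProbabilityMeasure ht0
  have : IsProbabilityMeasure P[|s ∩ t] := cond_isProbabilityMeasure hst
  have hXst : ∀ᵐ ω ∂P[|s ∩ t], |X ω| ≤ k := ae_cond_of_ae hXk
  have hZst : ∀ᵐ ω ∂P[|s ∩ t], |Z ω| ≤ k := ae_cond_of_ae hZk
  have hM : |∫ ω, (X ω - ∫ ω, X ω ∂P[|s]) * (Z ω - ∫ ω, Z ω ∂P[|t]) ∂P[|s ∩ t]| ≤ 4 * k ^ 2 :=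
    abs_integral_sub_mul_sub_le hXst hZst
      (abs_integral_le_of_ae_abs_le (ae_cond_of_ae hXk))
      (abs_integral_le_of_ae_abs_le (ae_cond_of_ae hZk))
  have hXint := integrable_of_ae_abs_le (hX.mono_ac cond_absolutelyContinuous) hXst
  have hZint := integrable_of_ae_abs_le (hZ.mono_ac cond_absolutelyContinuous) hZst
  rw [cov_indicator_sub_integral_cond hs ht, cov_indicator_one_indicator_one hs ht, add_assoc,
    add_comm _ (cov _ _ _), ← integral_sub_mul_sub_eq_cov_add hXint hZint
      (hZint.bdd_mul hXint.aestronglyMeasurable (by simpa using hXst))]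
  exact mul_div_le_mul_abs_sub_add (ENNReal.toReal_pos hs0 (measure_ne_top _ _))
    (ENNReal.toReal_pos ht0 (measure_ne_top _ _)) hsk htk hM

theorem cov_indicator_specification_errors_bound_general
    {Ω : Type*} [MeasurableSpace Ω] (P : Measure Ω) [IsProbabilityMeasure P]
    {Δ : Type*} [DecidableEq Δ] [MeasurableSpace Δ] [MeasurableSingletonClass Δ]
    (n : ℕ) (d : Fin n → Ω → Δ) (Y : Fin n → Ω → ℝ)
    (hd : ∀ i, Measurable (d i)) (hY : ∀ i, Measurable (Y i))
    (k₁ k₂ : ℝ) (hbdd : ∀ i, ∀ᵐ ω ∂P, |Y i ω| ≤ k₁)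
    -- assignment probabilities `pᵢ(e) = P(dᵢ = e)`
    (p : Fin n → Δ → ℝ) (hp : ∀ i e, p i e = (P {ω | d i ω = e}).toReal)
    -- conditional expected outcomes `ȳᵢ(e) = E[Yᵢ | dᵢ = e]` (zero for null events)
    (ybar : Fin n → Δ → ℝ)
    (hybar : ∀ i e, ybar i e = ∫ ω, Y i ω ∂(P[|{ω | d i ω = e}]))
    -- specification errors `εᵢ = Yᵢ − ȳᵢ(dᵢ)`
    (ε : Fin n → Ω → ℝ)
    (hε : ∀ i ω, ε i ω = Y i ω - ybar i (d i ω))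
    -- pairwise conditional means `μ̄ᵢⱼ(e₁,e₂) = E[Yᵢ | dᵢ = e₁, dⱼ = e₂]`
    (μbar : Fin n → Fin n → Δ → Δ → ℝ)
    (hμbar : ∀ i j e₁ e₂,
      μbar i j e₁ e₂ = ∫ ω, Y i ω ∂(P[|{ω | d i ω = e₁} ∩ {ω | d j ω = e₂}]))
    -- systematic part of the error: `ε̃ᵢⱼ(e₁,e₂) = μ̄ᵢⱼ(e₁,e₂) − ȳᵢ(e₁)`
    (εtilde : Fin n → Fin n → Δ → Δ → ℝ)
    (hεtilde : ∀ i j e₁ e₂, εtilde i j e₁ e₂ = μbar i j e₁ e₂ - ybar i e₁)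
    -- idiosyncratic part of the error: `ε̇ᵢⱼ = Yᵢ − μ̄ᵢⱼ(dᵢ, dⱼ)`
    (εdot : Fin n → Fin n → Ω → ℝ)
    (hεdot : ∀ i j ω, εdot i j ω = Y i ω - μbar i j (d i ω) (d j ω))
    (e : Δ) (hk₂ : ∀ i, 1 / p i e ≤ k₂)
    (i j : Fin n)
    (hpos : 0 < P ({ω | d i ω = e} ∩ {ω | d j ω = e})) :
    cov P (fun ω => if d i ω = e then ε i ω else 0) (fun ω => if d j ω = e then ε j ω else 0)
        / (p i e * p j e)
      ≤ 4 * k₁ ^ 2 * k₂ ^ 2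
            * |cov P (fun ω => if d i ω = e then (1 : ℝ) else 0)
                (fun ω => if d j ω = e then (1 : ℝ) else 0)|
        + εtilde i j e e * εtilde j i e e
        + condCov P ({ω | d i ω = e} ∩ {ω | d j ω = e}) (εdot i j) (εdot j i) := by
  set A := {ω | d i ω = e}
  set B := {ω | d j ω = e}
  have hA : MeasurableSet A := hd i (measurableSet_singleton e)
  have hB : MeasurableSet B := hd j (measurableSet_singleton e)
  have hεind : ∀ m, (fun ω => if d m ω = e then ε m ω else 0)
      = {ω | d m ω = e}.indicator fun ω => Y m ω - ∫ ω, Y m ω ∂P[|{ω | d m ω = e}] := by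
    intro m; ext ω
    by_cases h : d m ω = e <;> simp [h, hε, hybar]
  have hind : ∀ m,
      (fun ω => if d m ω = e then (1 : ℝ) else 0) = {ω | d m ω = e}.indicator 1 := by
    intro m; ext ω
    by_cases h : d m ω = e <;> simp [h]
  have hεdot : condCov P (A ∩ B) (εdot i j) (εdot j i) = cov P[|A ∩ B] (Y i) (Y j) := by
    refine condCov_eq_cov_cond_of_eqOn_sub_const (a := μbar i j e e) (b := μbar j i e e)
      (hA.inter hB) hpos.ne'
      (hY i).aestronglyMeasurable (hY j).aestronglyMeasurable (hbdd i) (hbdd j) ?_ ?_ <;>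
    · rintro ω ⟨hi, hj⟩
      rw [hεdot, show d i ω = e from hi, show d j ω = e from hj]
  have hk : ∀ m, 1 / P.real {ω | d m ω = e} ≤ k₂ := fun m => by
    rw [measureReal_def, ← hp]; exact hk₂ m
  rw [hεind, hεind, hind, hind, hεdot, hεtilde, hεtilde, hμbar, hμbar, hybar, hybar,
    Set.inter_comm {ω | d j ω = e}, hp, hp]
  exact cov_indicator_centered_div_le hA hB hpos.ne' (hY i).aestronglyMeasurable
    (hY j).aestronglyMeasurable (hbdd i) (hbdd j) (hk i) (hk j)

/-- For units `i ≠ j` and exposure `e` with positive joint assignment probability, if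
`|Yᵢ| ≤ k₁` a.s. and `1/pᵢ(e) ≤ k₂`, then
`Cov(1{dᵢ=e}εᵢ, 1{dⱼ=e}εⱼ)/(pᵢ(e)pⱼ(e))
  ≤ 4k₁²k₂²·|Cov(1{dᵢ=e}, 1{dⱼ=e})| + ε̃ᵢⱼ(e,e)·ε̃ⱼᵢ(e,e) + Cov(ε̇ᵢⱼ, ε̇ⱼᵢ | dᵢ=e, dⱼ=e)`. -/
theorem cov_indicator_specification_errors_bound
    {Ω : Type*} [MeasurableSpace Ω] (P : Measure Ω) [IsProbabilityMeasure P]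
    {Δ : Type*} [Fintype Δ] [DecidableEq Δ] [MeasurableSpace Δ] [MeasurableSingletonClass Δ]
    (n : ℕ) (d : Fin n → Ω → Δ) (Y : Fin n → Ω → ℝ)
    (hd : ∀ i, Measurable (d i)) (hY : ∀ i, Measurable (Y i))
    (k₁ k₂ : ℝ) (hbdd : ∀ i, ∀ᵐ ω ∂P, |Y i ω| ≤ k₁)
    -- assignment probabilities `pᵢ(e) = P(dᵢ = e)`
    (p : Fin n → Δ → ℝ) (hp : ∀ i e, p i e = (P {ω | d i ω = e}).toReal)
    -- conditional expected outcomes `ȳᵢ(e) = E[Yᵢ | dᵢ = e]` (zero for null events)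
    (ybar : Fin n → Δ → ℝ)
    (hybar : ∀ i e, ybar i e = ∫ ω, Y i ω ∂(P[|{ω | d i ω = e}]))
    -- specification errors `εᵢ = Yᵢ − ȳᵢ(dᵢ)`
    (ε : Fin n → Ω → ℝ)
    (hε : ∀ i ω, ε i ω = Y i ω - ybar i (d i ω))
    -- pairwise conditional means `μ̄ᵢⱼ(e₁,e₂) = E[Yᵢ | dᵢ = e₁, dⱼ = e₂]`
    (μbar : Fin n → Fin n → Δ → Δ → ℝ)
    (hμbar : ∀ i j e₁ e₂,
      μbar i j e₁ e₂ = ∫ ω, Y i ω ∂(P[|{ω | d i ω = e₁} ∩ {ω | d j ω = e₂}]))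
    -- systematic part of the error: `ε̃ᵢⱼ(e₁,e₂) = μ̄ᵢⱼ(e₁,e₂) − ȳᵢ(e₁)`
    (εtilde : Fin n → Fin n → Δ → Δ → ℝ)
    (hεtilde : ∀ i j e₁ e₂, εtilde i j e₁ e₂ = μbar i j e₁ e₂ - ybar i e₁)
    -- idiosyncratic part of the error: `ε̇ᵢⱼ = Yᵢ − μ̄ᵢⱼ(dᵢ, dⱼ)`
    (εdot : Fin n → Fin n → Ω → ℝ)
    (hεdot : ∀ i j ω, εdot i j ω = Y i ω - μbar i j (d i ω) (d j ω))
    (e : Δ) (hk₂ : ∀ i, 1 / p i e ≤ k₂)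
    (i j : Fin n) (hij : i ≠ j)
    (hpos : 0 < P ({ω | d i ω = e} ∩ {ω | d j ω = e})) :
    cov P (fun ω => if d i ω = e then ε i ω else 0) (fun ω => if d j ω = e then ε j ω else 0)
        / (p i e * p j e)
      ≤ 4 * k₁ ^ 2 * k₂ ^ 2
            * |cov P (fun ω => if d i ω = e then (1 : ℝ) else 0)
                (fun ω => if d j ω = e then (1 : ℝ) else 0)|
        + εtilde i j e e * εtilde j i e e
        + condCov P ({ω | d i ω = e} ∩ {ω | d j ω = e}) (εdot i j) (εdot j i) :=
  cov_indicator_specification_errors_bound_general P n d Y hd hY k₁ k₂ hbdd p hp ybar hybar ε hε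
    μbar hμbar εtilde hεtilde εdot hεdot e hk₂ i j hpos
end

section
/- Suppose |Yᵢ| ≤ k₁ almost surely for all i, that 1/pᵢ(e) ≤ k₂ for all i and e ∈ {a, b}, and that P(dᵢ = e, dⱼ = e) > 0 for all i ≠ j and e ∈ {a, b}. Define for e ∈ {a, b}: C(e) = (1/n²)ΣᵢΣ_{j≠i}|Cov(1{dᵢ=e}, 1{dⱼ=e})|, E(e) = (1/n²)ΣᵢΣ_{j≠i} ε̃ᵢⱼ(e,e)ε̃ⱼᵢ(e,e), and U(e) = (1/n²)ΣᵢΣ_{j≠i} Cov(ε̇ᵢⱼ, ε̇ⱼᵢ | dᵢ = e, dⱼ = e). Then the Horvitz–Thompson estimator satisfies Var(τ̂) ≤ 8k₁²k₂/n + 20k₁²k₂²(C(a) + C(b)) + 4(E(a) + E(b) + U(a) + U(b)). -/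
open MeasureTheory ProbabilityTheory Real Finset

/-!
Write `1{dᵢ = e} Yᵢ / pᵢ(e) = Aᵢ + Bᵢ`, where `Aᵢ = 1{dᵢ = e} (Yᵢ - ȳᵢ(e)) / pᵢ(e)` carries the
specification error and `Bᵢ = 1{dᵢ = e} ȳᵢ(e) / pᵢ(e)`. Two uses of
`Var(X ± Y) ≤ 2 Var X + 2 Var Y` reduce the claim to bounding `∑ᵢⱼ Cov(Aᵢ, Aⱼ) + Cov(Bᵢ, Bⱼ)` for
each exposure. On the diagonal `Aᵢ` and `Bᵢ` are uncorrelated, so their variances add up to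
`Var(1{dᵢ = e} Yᵢ / pᵢ) ≤ k₁² / pᵢ`. Off the diagonal, with `π = P(dᵢ = e, dⱼ = e)`, both
covariances are explicit: `Cov(Bᵢ, Bⱼ) = ȳᵢ ȳⱼ (π - pᵢ pⱼ) / (pᵢ pⱼ)` and
`Cov(Aᵢ, Aⱼ) = π / (pᵢ pⱼ) · D`, where `D = E[(Yᵢ - ȳᵢ)(Yⱼ - ȳⱼ) | dᵢ = dⱼ = e]` splits as
`ε̃ᵢⱼ ε̃ⱼᵢ + Cov(ε̇ᵢⱼ, ε̇ⱼᵢ | dᵢ = dⱼ = e)`. Writing `π / (pᵢ pⱼ) = 1 + (π - pᵢ pⱼ) / (pᵢ pⱼ)` and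
using `|D + ȳᵢ ȳⱼ| ≤ 5 k₁²` leaves exactly the design-dependence term.
-/

section General

variable {Ω : Type*} [MeasurableSpace Ω] {μ P : Measure Ω} {s t : Set Ω} {f g X Y : Ω → ℝ} {k : ℝ}

lemma variance_fun_add_le [IsFiniteMeasure μ] (hX : MemLp X 2 μ) (hY : MemLp Y 2 μ) :
    Var[fun ω => X ω + Y ω; μ] ≤ 2 * Var[X; μ] + 2 * Var[Y; μ] := by
  have := variance_nonneg (fun ω => X ω - Y ω) μ
  rw [variance_fun_add hX hY]
  rw [variance_fun_sub hX hY] at this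
  linarith

lemma variance_fun_sub_le [IsFiniteMeasure μ] (hX : MemLp X 2 μ) (hY : MemLp Y 2 μ) :
    Var[fun ω => X ω - Y ω; μ] ≤ 2 * Var[X; μ] + 2 * Var[Y; μ] := by
  have := variance_nonneg (fun ω => X ω + Y ω) μ
  rw [variance_fun_sub hX hY]
  rw [variance_fun_add hX hY] at this
  linarith

lemma integral_sub_mul_sub_eq_covariance_add [IsProbabilityMeasure μ] (hX : MemLp X 2 μ)
    (hY : MemLp Y 2 μ) (a b : ℝ) :
    ∫ ω, (X ω - a) * (Y ω - b) ∂μ = cov[X, Y; μ] + (μ[X] - a) * (μ[Y] - b) := by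
  have h := covariance_eq_sub (X := fun ω => X ω - a) (Y := fun ω => Y ω - b)
    (hX.sub (memLp_const a)) (hY.sub (memLp_const b))
  rw [covariance_fun_sub_fun_sub hX (memLp_const a) hY (memLp_const b)] at h
  simp only [covariance_const_left, covariance_const_right, sub_zero, add_zero] at h
  rw [h, integral_sub (hX.integrable one_le_two) (integrable_const a),
    integral_sub (hY.integrable one_le_two) (integrable_const b)]
  simp

lemma abs_integral_le_of_ae_abs_le_s12 [IsZeroOrProbabilityMeasure μ] (hk : 0 ≤ k)
    (hf : ∀ᵐ ω ∂μ, |f ω| ≤ k) : |∫ ω, f ω ∂μ| ≤ k := by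
  have := norm_integral_le_of_norm_le_const (μ := μ) (f := f) (by simpa using hf)
  rcases IsZeroOrProbabilityMeasure.measure_univ (μ := μ) with h | h <;>
    simp_all [Measure.real]

lemma integral_indicator_eq_measureReal_mul_integral_cond [IsFiniteMeasure P]
    (hs : MeasurableSet s) (f : Ω → ℝ) :
    ∫ ω, s.indicator f ω ∂P = P.real s * ∫ ω, f ω ∂P[|s] := by
  rw [integral_indicator hs, ProbabilityTheory.cond, integral_smul_measure, smul_eq_mul,
    ← mul_assoc, ENNReal.toReal_inv]
  rcases eq_or_ne (P s) 0 with h | h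
  · simp [Measure.restrict_eq_zero.mpr h]
  · rw [measureReal_def, mul_inv_cancel₀ (ENNReal.toReal_ne_zero.mpr ⟨h, measure_ne_top _ _⟩),
      one_mul]

lemma covariance_indicator_one [IsProbabilityMeasure P] (hs : MeasurableSet s)
    (ht : MeasurableSet t) :
    cov[s.indicator 1, t.indicator 1; P] = P.real (s ∩ t) - P.real s * P.real t := by
  rw [covariance_eq_sub (X := s.indicator 1) (Y := t.indicator 1)
    ((memLp_const 1).indicator hs) ((memLp_const 1).indicator ht)]
  have : s.indicator (1 : Ω → ℝ) * t.indicator 1 = (s ∩ t).indicator 1 := by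
    ext ω; simp [← Set.inter_indicator_mul, Pi.one_def]
  rw [this, integral_indicator_one hs, integral_indicator_one ht,
    integral_indicator_one (hs.inter ht)]

lemma memLp_indicator_div (hs : MeasurableSet s) (hf : MemLp f 2 P) :
    MemLp (fun ω => s.indicator f ω / P.real s) 2 P := by
  simpa only [div_eq_mul_inv] using (hf.indicator hs).mul_const (P.real s)⁻¹

lemma MeasureTheory.MemLp.cond {p : ENNReal} (hf : MemLp f p P) (hs : P s ≠ 0) :
    MemLp f p P[|s] :=
  (hf.restrict s).smul_measure (ENNReal.inv_ne_top.2 hs)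

lemma cov_indicator_one [IsProbabilityMeasure P] (hs : MeasurableSet s) (ht : MeasurableSet t) :
    cov P (s.indicator 1) (t.indicator 1) = P.real (s ∩ t) - P.real s * P.real t :=
  (covariance_eq_sub (X := s.indicator 1) (Y := t.indicator 1)
    ((memLp_const 1).indicator hs) ((memLp_const 1).indicator ht)).symm.trans
    (covariance_indicator_one hs ht)

lemma condCov_eq_covariance_of_ae_eq_sub_const [IsFiniteMeasure P] {A : Set Ω} {X' Y' : Ω → ℝ}
    {a b : ℝ} (hA : P A ≠ 0) (hX : MemLp X 2 P[|A]) (hY : MemLp Y 2 P[|A])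
    (hX' : ∀ᵐ ω ∂P[|A], X' ω = X ω - a) (hY' : ∀ᵐ ω ∂P[|A], Y' ω = Y ω - b) :
    condCov P A X' Y' = cov[X, Y; P[|A]] := by
  have := cond_isProbabilityMeasure (s := A) hA
  have hXY : ∀ᵐ ω ∂P[|A], X' ω * Y' ω = (X ω - a) * (Y ω - b) := by
    filter_upwards [hX', hY'] with ω h1 h2; rw [h1, h2]
  rw [condCov, integral_congr_ae hXY, integral_congr_ae hX', integral_congr_ae hY',
    integral_sub_mul_sub_eq_covariance_add hX hY, integral_sub (hX.integrable one_le_two)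
    (integrable_const a), integral_sub (hY.integrable one_le_two) (integrable_const b)]
  simp

end General

section InverseProbabilityWeighting

variable {Ω : Type*} [MeasurableSpace Ω] {P : Measure Ω} [IsProbabilityMeasure P]
  {s t : Set Ω} {f g : Ω → ℝ} {k : ℝ}

noncomputable def ipwError (P : Measure Ω) (s : Set Ω) (f : Ω → ℝ) (ω : Ω) : ℝ :=
  s.indicator (fun ω => f ω - ∫ x, f x ∂P[|s]) ω / P.real s

noncomputable def ipwMean (P : Measure Ω) (s : Set Ω) (f : Ω → ℝ) (ω : Ω) : ℝ :=
  s.indicator (fun _ => ∫ x, f x ∂P[|s]) ω / P.real s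

/-- The paper's `ε̃ᵢⱼ(e, e)` for `s = {dᵢ = e}` and `t = {dⱼ = e}`. -/
noncomputable def condMeanShift (P : Measure Ω) (s t : Set Ω) (f : Ω → ℝ) : ℝ :=
  (∫ ω, f ω ∂P[|s ∩ t]) - ∫ ω, f ω ∂P[|s]

lemma ipwError_add_ipwMean (P : Measure Ω) (s : Set Ω) (f : Ω → ℝ) (ω : Ω) :
    ipwError P s f ω + ipwMean P s f ω = s.indicator f ω / P.real s := by
  by_cases h : ω ∈ s <;> simp [ipwError, ipwMean, h, ← add_div]

lemma ipwMean_eq_mul_indicator_one (P : Measure Ω) (s : Set Ω) (f : Ω → ℝ) :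
    ipwMean P s f = fun ω => (∫ x, f x ∂P[|s]) / P.real s * s.indicator 1 ω := by
  ext ω; by_cases h : ω ∈ s <;> simp [ipwMean, h]

lemma memLp_ipwError (hs : MeasurableSet s) (hf : MemLp f 2 P) : MemLp (ipwError P s f) 2 P :=
  memLp_indicator_div hs (hf.sub (memLp_const _))

lemma memLp_ipwMean (hs : MeasurableSet s) : MemLp (ipwMean P s f) 2 P :=
  memLp_indicator_div hs (memLp_const _)

lemma integral_ipwError (hs : MeasurableSet s) (hf : Integrable f P) :
    ∫ ω, ipwError P s f ω ∂P = 0 := by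
  have hsub : s.indicator (fun ω => f ω - ∫ x, f x ∂P[|s])
      = fun ω => s.indicator f ω - s.indicator (fun _ => ∫ x, f x ∂P[|s]) ω := by
    ext ω; by_cases h : ω ∈ s <;> simp [h]
  simp only [ipwError]
  rw [integral_div, hsub, integral_sub (hf.indicator hs) ((integrable_const _).indicator hs),
    integral_indicator_eq_measureReal_mul_integral_cond hs, integral_indicator_const _ hs]
  simp

lemma covariance_ipwError (hs : MeasurableSet s) (ht : MeasurableSet t) (hf : MemLp f 2 P)
    (hg : MemLp g 2 P) :
    cov[ipwError P s f, ipwError P t g; P] = P.real (s ∩ t) / (P.real s * P.real t) *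
      ∫ ω, (f ω - ∫ x, f x ∂P[|s]) * (g ω - ∫ x, g x ∂P[|t]) ∂P[|s ∩ t] := by
  rw [covariance_eq_sub (memLp_ipwError hs hf) (memLp_ipwError ht hg),
    integral_ipwError hs (hf.integrable one_le_two), zero_mul, sub_zero]
  have hmul : ipwError P s f * ipwError P t g = fun ω => (s ∩ t).indicator
      (fun ω => (f ω - ∫ x, f x ∂P[|s]) * (g ω - ∫ x, g x ∂P[|t])) ω
        / (P.real s * P.real t) := by
    ext ω; simp only [Pi.mul_apply, ipwError, Set.inter_indicator_mul, div_mul_div_comm]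
  rw [hmul, integral_div, integral_indicator_eq_measureReal_mul_integral_cond (hs.inter ht)]
  ring

lemma covariance_ipwMean (hs : MeasurableSet s) (ht : MeasurableSet t) :
    cov[ipwMean P s f, ipwMean P t g; P] = (∫ x, f x ∂P[|s]) * (∫ x, g x ∂P[|t]) /
      (P.real s * P.real t) * (P.real (s ∩ t) - P.real s * P.real t) := by
  rw [ipwMean_eq_mul_indicator_one, ipwMean_eq_mul_indicator_one, covariance_const_mul_left,
    covariance_const_mul_right, covariance_indicator_one hs ht]
  ring

lemma covariance_ipwError_ipwMean_self (hs : MeasurableSet s) (hf : MemLp f 2 P) :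
    cov[ipwError P s f, ipwMean P s f; P] = 0 := by
  have hmul : ipwError P s f * ipwMean P s f
      = fun ω => (∫ x, f x ∂P[|s]) / P.real s * ipwError P s f ω := by
    ext ω; by_cases h : ω ∈ s <;> simp [ipwError, ipwMean, h]; ring
  rw [covariance_eq_sub (memLp_ipwError hs hf) (memLp_ipwMean hs), hmul, integral_const_mul,
    integral_ipwError hs (hf.integrable one_le_two)]
  simp

end InverseProbabilityWeighting

section Bounds

variable {Ω : Type*} [MeasurableSpace Ω] {P : Measure Ω} [IsProbabilityMeasure P]
  {s t : Set Ω} {f g : Ω → ℝ} {k : ℝ}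

lemma memLp_of_ae_abs_le (hf : AEStronglyMeasurable f P) (hfb : ∀ᵐ ω ∂P, |f ω| ≤ k) :
    MemLp f 2 P :=
  MemLp.of_bound hf k (by simpa only [Real.norm_eq_abs] using hfb)

lemma variance_indicator_div_le (hs : MeasurableSet s) (hf : AEStronglyMeasurable f P)
    (hfb : ∀ᵐ ω ∂P, |f ω| ≤ k) :
    Var[fun ω => s.indicator f ω / P.real s; P] ≤ k ^ 2 / P.real s := by
  have hsq : ∀ᵐ ω ∂P,
      (s.indicator f ω / P.real s) ^ 2 ≤ s.indicator (fun _ => k ^ 2) ω / P.real s ^ 2 := by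
    filter_upwards [hfb] with ω hω
    by_cases h : ω ∈ s
    · simp only [Set.indicator_of_mem h, div_pow]
      refine div_le_div_of_nonneg_right ?_ (sq_nonneg _)
      simpa only [sq_abs] using pow_le_pow_left₀ (abs_nonneg _) hω 2
    · simp [h]
  calc Var[fun ω => s.indicator f ω / P.real s; P]
      ≤ ∫ ω, (s.indicator f ω / P.real s) ^ 2 ∂P :=
        variance_le_expectation_sq (by have := hf.indicator hs; fun_prop)
    _ ≤ ∫ ω, s.indicator (fun _ => k ^ 2) ω / P.real s ^ 2 ∂P :=
        integral_mono_of_nonneg (.of_forall fun _ => sq_nonneg _)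
          (((integrable_const _).indicator hs).div_const _) hsq
    _ = k ^ 2 / P.real s := by
        rw [integral_div, integral_indicator_const _ hs, smul_eq_mul]
        rcases eq_or_ne (P.real s) 0 with h | h
        · simp [h]
        · field_simp

lemma variance_ipwError_add_variance_ipwMean_le (hs : MeasurableSet s)
    (hf : AEStronglyMeasurable f P) (hfb : ∀ᵐ ω ∂P, |f ω| ≤ k) :
    Var[ipwError P s f; P] + Var[ipwMean P s f; P] ≤ k ^ 2 / P.real s := by
  have hf2 := memLp_of_ae_abs_le hf hfb
  have hsum := variance_add (memLp_ipwError hs hf2) (memLp_ipwMean (f := f) hs)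
  rw [covariance_ipwError_ipwMean_self hs hf2, mul_zero, add_zero] at hsum
  rw [← hsum, show ipwError P s f + ipwMean P s f = fun ω => s.indicator f ω / P.real s from
    funext (ipwError_add_ipwMean P s f)]
  exact variance_indicator_div_le hs hf hfb

lemma abs_integral_cond_le (hfb : ∀ᵐ ω ∂P, |f ω| ≤ k) : |∫ ω, f ω ∂P[|s]| ≤ k :=
  abs_integral_le_of_ae_abs_le_s12 ((abs_nonneg _).trans hfb.exists.choose_spec)
    (cond_absolutelyContinuous.ae_le hfb)

lemma covariance_ipwError_add_covariance_ipwMean_le (hs : MeasurableSet s)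
    (ht : MeasurableSet t) (hf : AEStronglyMeasurable f P) (hg : AEStronglyMeasurable g P)
    (hfb : ∀ᵐ ω ∂P, |f ω| ≤ k) (hgb : ∀ᵐ ω ∂P, |g ω| ≤ k) (hst : P (s ∩ t) ≠ 0) :
    cov[ipwError P s f, ipwError P t g; P] + cov[ipwMean P s f, ipwMean P t g; P]
      ≤ condMeanShift P s t f * condMeanShift P t s g + cov[f, g; P[|s ∩ t]]
        + 5 * k ^ 2 * |P.real (s ∩ t) - P.real s * P.real t| / (P.real s * P.real t) := by
  have := cond_isProbabilityMeasure hst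
  have hk : 0 ≤ k := (abs_nonneg _).trans hfb.exists.choose_spec
  have hfb' := (cond_absolutelyContinuous (s := s ∩ t)).ae_le hfb
  have hgb' := (cond_absolutelyContinuous (s := s ∩ t)).ae_le hgb
  set ms := ∫ ω, f ω ∂P[|s]
  set mt := ∫ ω, g ω ∂P[|t]
  set D := ∫ ω, (f ω - ms) * (g ω - mt) ∂P[|s ∩ t]
  have hms : |ms| ≤ k := abs_integral_cond_le hfb
  have hmt : |mt| ≤ k := abs_integral_cond_le hgb
  have hD : D = cov[f, g; P[|s ∩ t]] + condMeanShift P s t f * condMeanShift P t s g := by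
    rw [condMeanShift, condMeanShift, Set.inter_comm t s]
    exact
    integral_sub_mul_sub_eq_covariance_add
      (memLp_of_ae_abs_le (hf.mono_ac cond_absolutelyContinuous) hfb')
      (memLp_of_ae_abs_le (hg.mono_ac cond_absolutelyContinuous) hgb') ms mt
  have hDb : |D| ≤ 4 * k ^ 2 := by
    refine abs_integral_le_of_ae_abs_le_s12 (by positivity) ?_
    filter_upwards [hfb', hgb'] with ω hfω hgω
    rw [abs_mul]
    nlinarith [abs_sub (f ω) ms, abs_sub (g ω) mt, abs_nonneg (f ω - ms), abs_nonneg (g ω - mt)]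
  have hps : 0 < P.real s := ENNReal.toReal_pos
    (fun h => hst (measure_mono_null Set.inter_subset_left h)) (measure_ne_top _ _)
  have hpt : 0 < P.real t := ENNReal.toReal_pos
    (fun h => hst (measure_mono_null Set.inter_subset_right h)) (measure_ne_top _ _)
  have hsplit : P.real (s ∩ t) / (P.real s * P.real t) * D
        + ms * mt / (P.real s * P.real t) * (P.real (s ∩ t) - P.real s * P.real t)
      = D + (P.real (s ∩ t) - P.real s * P.real t) / (P.real s * P.real t) * (D + ms * mt) := by
    field_simp; ring
  have hrest : (P.real (s ∩ t) - P.real s * P.real t) / (P.real s * P.real t) * (D + ms * mt)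
      ≤ 5 * k ^ 2 * |P.real (s ∩ t) - P.real s * P.real t| / (P.real s * P.real t) := by
    have hDm : |D + ms * mt| ≤ 5 * k ^ 2 := by
      have := abs_add_le D (ms * mt)
      rw [abs_mul] at this
      nlinarith [abs_nonneg ms, abs_nonneg mt]
    calc _ ≤ |(P.real (s ∩ t) - P.real s * P.real t) / (P.real s * P.real t)| * |D + ms * mt| :=
          (le_abs_self _).trans (abs_mul _ _).le
      _ ≤ |P.real (s ∩ t) - P.real s * P.real t| / (P.real s * P.real t) * (5 * k ^ 2) := by
          rw [abs_div, abs_of_pos (by positivity : 0 < P.real s * P.real t)]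
          gcongr
      _ = _ := by ring
  rw [covariance_ipwError hs ht (memLp_of_ae_abs_le hf hfb) (memLp_of_ae_abs_le hg hgb),
    covariance_ipwMean hs ht, hsplit]
  linarith

end Bounds

section Family

variable {Ω : Type*} [MeasurableSpace Ω] {P : Measure Ω} [IsProbabilityMeasure P]
  {ι : Type*} [Fintype ι] [DecidableEq ι] {s : ι → Set Ω} {f : ι → Ω → ℝ} {k k₂ : ℝ}

lemma variance_sum_indicator_div_le (hs : ∀ i, MeasurableSet (s i))
    (hf : ∀ i, AEStronglyMeasurable (f i) P) (hfb : ∀ i, ∀ᵐ ω ∂P, |f i ω| ≤ k)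
    (hk₂ : ∀ i, 1 / P.real (s i) ≤ k₂) (hst : ∀ i j, i ≠ j → P (s i ∩ s j) ≠ 0) :
    Var[fun ω => ∑ i, (s i).indicator (f i) ω / P.real (s i); P]
      ≤ 2 * (Fintype.card ι * (k ^ 2 * k₂) + ∑ i, ∑ j ∈ univ.erase i,
        (condMeanShift P (s i) (s j) (f i) * condMeanShift P (s j) (s i) (f j)
          + cov[f i, f j; P[|s i ∩ s j]]
          + 5 * k ^ 2 * k₂ ^ 2 * |P.real (s i ∩ s j) - P.real (s i) * P.real (s j)|)) := by
  have hf2 i := memLp_of_ae_abs_le (hf i) (hfb i)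
  have hA i := memLp_ipwError (hs i) (hf2 i)
  have hB i := memLp_ipwMean (P := P) (f := f i) (hs i)
  have hdiag i : cov[ipwError P (s i) (f i), ipwError P (s i) (f i); P]
      + cov[ipwMean P (s i) (f i), ipwMean P (s i) (f i); P] ≤ k ^ 2 * k₂ := by
    rw [covariance_self (hA i).aemeasurable, covariance_self (hB i).aemeasurable]
    refine (variance_ipwError_add_variance_ipwMean_le (hs i) (hf i) (hfb i)).trans ?_
    rw [div_eq_mul_one_div]
    gcongr
    exact hk₂ i
  have hoff i j (hij : i ≠ j) : cov[ipwError P (s i) (f i), ipwError P (s j) (f j); P]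
      + cov[ipwMean P (s i) (f i), ipwMean P (s j) (f j); P]
      ≤ condMeanShift P (s i) (s j) (f i) * condMeanShift P (s j) (s i) (f j)
          + cov[f i, f j; P[|s i ∩ s j]]
          + 5 * k ^ 2 * k₂ ^ 2 * |P.real (s i ∩ s j) - P.real (s i) * P.real (s j)| := by
    have hk₂0 : 0 ≤ 1 / P.real (s i) := by positivity
    have hprod : 1 / (P.real (s i) * P.real (s j)) ≤ k₂ ^ 2 := by
      rw [sq, ← one_div_mul_one_div]
      exact mul_le_mul (hk₂ i) (hk₂ j) (by positivity) (hk₂0.trans (hk₂ i))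
    have hC : 5 * k ^ 2 * |P.real (s i ∩ s j) - P.real (s i) * P.real (s j)|
          / (P.real (s i) * P.real (s j))
        ≤ 5 * k ^ 2 * k₂ ^ 2 * |P.real (s i ∩ s j) - P.real (s i) * P.real (s j)| := by
      rw [div_eq_mul_one_div, mul_right_comm]
      gcongr
    linarith [covariance_ipwError_add_covariance_ipwMean_le (hs i) (hs j) (hf i) (hf j) (hfb i)
      (hfb j) (hst i j hij)]
  have hsum : (fun ω => ∑ i, (s i).indicator (f i) ω / P.real (s i))
      = fun ω => ∑ i, ipwError P (s i) (f i) ω + ∑ i, ipwMean P (s i) (f i) ω := by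
    ext ω; simp only [← sum_add_distrib, ipwError_add_ipwMean]
  rw [hsum]
  refine (variance_fun_add_le (memLp_finsetSum _ fun i _ => hA i)
    (memLp_finsetSum _ fun i _ => hB i)).trans ?_
  rw [variance_fun_sum hA, variance_fun_sum hB, ← mul_add, ← sum_add_distrib]
  gcongr 2 * ?_
  convert sum_le_sum fun i _ =>
    add_le_add (hdiag i) (sum_le_sum fun j hj => hoff i j (ne_of_mem_erase hj).symm) using 1
  · exact sum_congr rfl fun i _ => by rw [← sum_add_distrib, ← add_sum_erase _ _ (mem_univ i)]
  · rw [sum_add_distrib, sum_const, card_univ, nsmul_eq_mul]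

end Family

section HorvitzThompson

variable {Ω : Type*} [MeasurableSpace Ω] {P : Measure Ω}
  {n : ℕ} {s : Fin n → Set Ω} {f : Fin n → Ω → ℝ} {k k₂ : ℝ}

noncomputable def htMean (P : Measure Ω) (s : Fin n → Set Ω) (f : Fin n → Ω → ℝ) (ω : Ω) : ℝ :=
  1 / (n : ℝ) * ∑ i, (s i).indicator (f i) ω / P.real (s i)

lemma memLp_htMean (hs : ∀ i, MeasurableSet (s i)) (hf : ∀ i, MemLp (f i) 2 P) :
    MemLp (htMean P s f) 2 P :=
  (memLp_finsetSum _ fun i _ => memLp_indicator_div (hs i) (hf i)).const_mul _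

lemma variance_htMean_le [IsProbabilityMeasure P] (hs : ∀ i, MeasurableSet (s i))
    (hf : ∀ i, AEStronglyMeasurable (f i) P) (hfb : ∀ i, ∀ᵐ ω ∂P, |f i ω| ≤ k)
    (hk₂ : ∀ i, 1 / P.real (s i) ≤ k₂) (hst : ∀ i j, i ≠ j → P (s i ∩ s j) ≠ 0) :
    Var[htMean P s f; P] ≤ 2 * (k ^ 2 * k₂ / n + 1 / (n : ℝ) ^ 2 * ∑ i, ∑ j ∈ univ.erase i,
        (condMeanShift P (s i) (s j) (f i) * condMeanShift P (s j) (s i) (f j)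
          + cov[f i, f j; P[|s i ∩ s j]]
          + 5 * k ^ 2 * k₂ ^ 2 * |P.real (s i ∩ s j) - P.real (s i) * P.real (s j)|)) := by
  unfold htMean
  rw [variance_const_mul]
  refine (mul_le_mul_of_nonneg_left (variance_sum_indicator_div_le hs hf hfb hk₂ hst)
    (sq_nonneg _)).trans_eq ?_
  rw [Fintype.card_fin]
  rcases eq_or_ne (n : ℝ) 0 with hn | hn
  · simp [hn]
  · field_simp

end HorvitzThompson

theorem variance_horvitz_thompson_le_general
    {Ω : Type*} [MeasurableSpace Ω] (P : Measure Ω) [IsProbabilityMeasure P]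
    {Δ : Type*} [DecidableEq Δ] [MeasurableSpace Δ] [MeasurableSingletonClass Δ]
    (n : ℕ) (d : Fin n → Ω → Δ) (Y : Fin n → Ω → ℝ)
    (hd : ∀ i, Measurable (d i)) (hY : ∀ i, Measurable (Y i))
    (k₁ k₂ : ℝ) (hbdd : ∀ i, ∀ᵐ ω ∂P, |Y i ω| ≤ k₁)
    (a b : Δ)
    -- assignment probabilities `pᵢ(e) = P(dᵢ = e)`
    (p : Fin n → Δ → ℝ) (hp : ∀ i e, p i e = (P {ω | d i ω = e}).toReal)
    -- bounded inverse assignment probabilities for the exposures `a` and `b`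
    (hk₂ : ∀ i, ∀ e ∈ ({a, b} : Set Δ), 1 / p i e ≤ k₂)
    -- joint positivity for the exposures `a` and `b`
    (hpos : ∀ i j : Fin n, i ≠ j → ∀ e ∈ ({a, b} : Set Δ),
      0 < P ({ω | d i ω = e} ∩ {ω | d j ω = e}))
    -- conditional expected outcomes `ȳᵢ(e) = E[Yᵢ | dᵢ = e]` (zero for null events)
    (ybar : Fin n → Δ → ℝ)
    (hybar : ∀ i e, ybar i e = ∫ ω, Y i ω ∂(P[|{ω | d i ω = e}]))
    -- pairwise conditional means `μ̄ᵢⱼ(e₁,e₂) = E[Yᵢ | dᵢ = e₁, dⱼ = e₂]`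
    (μbar : Fin n → Fin n → Δ → Δ → ℝ)
    (hμbar : ∀ i j e₁ e₂,
      μbar i j e₁ e₂ = ∫ ω, Y i ω ∂(P[|{ω | d i ω = e₁} ∩ {ω | d j ω = e₂}]))
    -- systematic part of the error: `ε̃ᵢⱼ(e₁,e₂) = μ̄ᵢⱼ(e₁,e₂) − ȳᵢ(e₁)`
    (εtilde : Fin n → Fin n → Δ → Δ → ℝ)
    (hεtilde : ∀ i j e₁ e₂, εtilde i j e₁ e₂ = μbar i j e₁ e₂ - ybar i e₁)
    -- idiosyncratic part of the error: `ε̇ᵢⱼ = Yᵢ − μ̄ᵢⱼ(dᵢ, dⱼ)`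
    (εdot : Fin n → Fin n → Ω → ℝ)
    (hεdot : ∀ i j ω, εdot i j ω = Y i ω - μbar i j (d i ω) (d j ω))
    -- the design-dependence term `C(e)`
    (Cdep : Δ → ℝ)
    (hCdep : ∀ e, Cdep e = (1 / (n : ℝ) ^ 2) * ∑ i, ∑ j ∈ Finset.univ.erase i,
      |cov P (fun ω => if d i ω = e then (1 : ℝ) else 0)
        (fun ω => if d j ω = e then (1 : ℝ) else 0)|)
    -- the correlated-error term `E(e)`
    (Edep : Δ → ℝ)
    (hEdep : ∀ e, Edep e = (1 / (n : ℝ) ^ 2) * ∑ i, ∑ j ∈ Finset.univ.erase i,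
      εtilde i j e e * εtilde j i e e)
    -- the unit-error term `U(e)`
    (Udep : Δ → ℝ)
    (hUdep : ∀ e, Udep e = (1 / (n : ℝ) ^ 2) * ∑ i, ∑ j ∈ Finset.univ.erase i,
      condCov P ({ω | d i ω = e} ∩ {ω | d j ω = e}) (εdot i j) (εdot j i))
    -- the Horvitz–Thompson estimator
    (τhat : Ω → ℝ)
    (hτhat : ∀ ω, τhat ω = (1 / (n : ℝ)) * ∑ i,
      ((if d i ω = a then Y i ω else 0) / p i a - (if d i ω = b then Y i ω else 0) / p i b)) :
    variance τhat P
      ≤ 8 * k₁ ^ 2 * k₂ / n + 20 * k₁ ^ 2 * k₂ ^ 2 * (Cdep a + Cdep b)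
        + 4 * (Edep a + Edep b + Udep a + Udep b) := by
  have hs e i : MeasurableSet {ω | d i ω = e} := hd i (measurableSet_singleton e)
  have hY2 i : MemLp (Y i) 2 P := memLp_of_ae_abs_le (hY i).aestronglyMeasurable (hbdd i)
  have hτ : τhat = fun ω => htMean P (fun i => {ω | d i ω = a}) Y ω
      - htMean P (fun i => {ω | d i ω = b}) Y ω := by
    ext ω
    simp only [hτhat, htMean, hp, ← mul_sub, ← sum_sub_distrib, Set.indicator_apply,
      Set.mem_ofPred_eq, measureReal_def]
  have hS : ∀ e ∈ ({a, b} : Set Δ), Var[htMean P (fun i => {ω | d i ω = e}) Y; P]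
      ≤ 2 * (k₁ ^ 2 * k₂ / n + (Edep e + Udep e + 5 * k₁ ^ 2 * k₂ ^ 2 * Cdep e)) := by
    intro e he
    have hst i j (hij : i ≠ j) : P ({ω | d i ω = e} ∩ {ω | d j ω = e}) ≠ 0 :=
      (hpos i j hij e he).ne'
    have hind i : (fun ω => if d i ω = e then (1 : ℝ) else 0) = {ω | d i ω = e}.indicator 1 := by
      ext ω; simp [Set.indicator_apply]
    refine (variance_htMean_le (hs e) (fun i => (hY i).aestronglyMeasurable) hbdd
      (fun i => by simpa [hp, measureReal_def] using hk₂ i e he) hst).trans_eq ?_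
    rw [hEdep, hUdep, hCdep]
    simp only [mul_sum, ← sum_add_distrib]
    congr 2
    refine sum_congr rfl fun i _ => sum_congr rfl fun j hj => ?_
    have hij := hst i j (ne_of_mem_erase hj).symm
    have hmem := ae_cond_mem (μ := P) ((hs e i).inter (hs e j))
    rw [condMeanShift, condMeanShift, hεtilde, hεtilde, hμbar, hμbar, hybar, hybar, hind i,
      hind j, cov_indicator_one (hs e i) (hs e j),
      condCov_eq_covariance_of_ae_eq_sub_const (a := μbar i j e e) (b := μbar j i e e) hij
        ((hY2 i).cond hij) ((hY2 j).cond hij)]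
    · ring
    all_goals
      filter_upwards [hmem] with ω ⟨hi, hj⟩
      rw [hεdot, (hi : d i ω = e), (hj : d j ω = e)]
  rw [hτ]
  refine (variance_fun_sub_le (memLp_htMean (hs a) hY2) (memLp_htMean (hs b) hY2)).trans ?_
  refine (add_le_add (mul_le_mul_of_nonneg_left (hS a (by simp)) zero_le_two)
    (mul_le_mul_of_nonneg_left (hS b (by simp)) zero_le_two)).trans_eq ?_
  ring

/-- Bound on the variance of the Horvitz–Thompson estimator:
`Var(τ̂) ≤ 8k₁²k₂/n + 20k₁²k₂²(C(a) + C(b)) + 4(E(a) + E(b) + U(a) + U(b))`. -/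
theorem variance_horvitz_thompson_le
    {Ω : Type*} [MeasurableSpace Ω] (P : Measure Ω) [IsProbabilityMeasure P]
    {Δ : Type*} [Fintype Δ] [DecidableEq Δ] [MeasurableSpace Δ] [MeasurableSingletonClass Δ]
    (n : ℕ) (d : Fin n → Ω → Δ) (Y : Fin n → Ω → ℝ)
    (hd : ∀ i, Measurable (d i)) (hY : ∀ i, Measurable (Y i))
    (k₁ k₂ : ℝ) (hbdd : ∀ i, ∀ᵐ ω ∂P, |Y i ω| ≤ k₁)
    (a b : Δ)
    -- assignment probabilities `pᵢ(e) = P(dᵢ = e)`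
    (p : Fin n → Δ → ℝ) (hp : ∀ i e, p i e = (P {ω | d i ω = e}).toReal)
    -- bounded inverse assignment probabilities for the exposures `a` and `b`
    (hk₂ : ∀ i, ∀ e ∈ ({a, b} : Set Δ), 1 / p i e ≤ k₂)
    -- joint positivity for the exposures `a` and `b`
    (hpos : ∀ i j : Fin n, i ≠ j → ∀ e ∈ ({a, b} : Set Δ),
      0 < P ({ω | d i ω = e} ∩ {ω | d j ω = e}))
    -- conditional expected outcomes `ȳᵢ(e) = E[Yᵢ | dᵢ = e]` (zero for null events)
    (ybar : Fin n → Δ → ℝ)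
    (hybar : ∀ i e, ybar i e = ∫ ω, Y i ω ∂(P[|{ω | d i ω = e}]))
    -- pairwise conditional means `μ̄ᵢⱼ(e₁,e₂) = E[Yᵢ | dᵢ = e₁, dⱼ = e₂]`
    (μbar : Fin n → Fin n → Δ → Δ → ℝ)
    (hμbar : ∀ i j e₁ e₂,
      μbar i j e₁ e₂ = ∫ ω, Y i ω ∂(P[|{ω | d i ω = e₁} ∩ {ω | d j ω = e₂}]))
    -- systematic part of the error: `ε̃ᵢⱼ(e₁,e₂) = μ̄ᵢⱼ(e₁,e₂) − ȳᵢ(e₁)`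
    (εtilde : Fin n → Fin n → Δ → Δ → ℝ)
    (hεtilde : ∀ i j e₁ e₂, εtilde i j e₁ e₂ = μbar i j e₁ e₂ - ybar i e₁)
    -- idiosyncratic part of the error: `ε̇ᵢⱼ = Yᵢ − μ̄ᵢⱼ(dᵢ, dⱼ)`
    (εdot : Fin n → Fin n → Ω → ℝ)
    (hεdot : ∀ i j ω, εdot i j ω = Y i ω - μbar i j (d i ω) (d j ω))
    -- the design-dependence term `C(e)`
    (Cdep : Δ → ℝ)
    (hCdep : ∀ e, Cdep e = (1 / (n : ℝ) ^ 2) * ∑ i, ∑ j ∈ Finset.univ.erase i,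
      |cov P (fun ω => if d i ω = e then (1 : ℝ) else 0)
        (fun ω => if d j ω = e then (1 : ℝ) else 0)|)
    -- the correlated-error term `E(e)`
    (Edep : Δ → ℝ)
    (hEdep : ∀ e, Edep e = (1 / (n : ℝ) ^ 2) * ∑ i, ∑ j ∈ Finset.univ.erase i,
      εtilde i j e e * εtilde j i e e)
    -- the unit-error term `U(e)`
    (Udep : Δ → ℝ)
    (hUdep : ∀ e, Udep e = (1 / (n : ℝ) ^ 2) * ∑ i, ∑ j ∈ Finset.univ.erase i,
      condCov P ({ω | d i ω = e} ∩ {ω | d j ω = e}) (εdot i j) (εdot j i))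
    -- the Horvitz–Thompson estimator
    (τhat : Ω → ℝ)
    (hτhat : ∀ ω, τhat ω = (1 / (n : ℝ)) * ∑ i,
      ((if d i ω = a then Y i ω else 0) / p i a - (if d i ω = b then Y i ω else 0) / p i b)) :
    variance τhat P
      ≤ 8 * k₁ ^ 2 * k₂ / n + 20 * k₁ ^ 2 * k₂ ^ 2 * (Cdep a + Cdep b)
        + 4 * (Edep a + Edep b + Udep a + Udep b) :=
  variance_horvitz_thompson_le_general P n d Y hd hY k₁ k₂ hbdd a b p hp hk₂ hpos ybar hybar μbar
    hμbar εtilde hεtilde εdot hεdot Cdep hCdep Edep hEdep Udep hUdep τhat hτhat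
end

section
/- Suppose |Yᵢ| ≤ k₁ almost surely for all i, that 1/pᵢ(e) ≤ k₂ for all i and e ∈ {a, b}, and that P(dᵢ = e, dⱼ = e) > 0 for all i, j and e ∈ {a, b}. Let ε̂ = (1/n)Σᵢ [1{dᵢ=a}εᵢ/pᵢ(a) − 1{dᵢ=b}εᵢ/pᵢ(b)] be the Horvitz–Thompson estimator applied to the specification errors, and for e ∈ {a,b} define D(e) = (1/n²)ΣᵢΣⱼ max(0, E[εᵢεⱼ | dᵢ = e, dⱼ = e]) (the sum ranging over all ordered pairs, including i = j). Then E[ε̂] = 0 and Var(ε̂) ≤ 2k₂(D(a) + D(b)). -/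
open MeasureTheory ProbabilityTheory Real Finset
open scoped ENNReal

/-! On `{dᵢ = e}` the error `εᵢ` is `Yᵢ` minus its conditional mean there, so each weighted term
`1{dᵢ = e} εᵢ / pᵢ(e)` has mean zero. For the variance, `Var ≤ E[ε̂²]` and
`(x - z)² ≤ 2x² + 2z²` reduce to the second moments of the two Horvitz–Thompson sums, whose cross
moments are `P(dᵢ = e, dⱼ = e) E[εᵢεⱼ | dᵢ = dⱼ = e] / (pᵢ(e) pⱼ(e))`; since
`P(dᵢ = e, dⱼ = e) ≤ pᵢ(e)`, each is at most `[E[εᵢεⱼ | dᵢ = dⱼ = e]]⁺ / pⱼ(e)`. -/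

namespace ProbabilityTheory

variable {Ω : Type*} [MeasurableSpace Ω] {μ : Measure Ω} {s t : Set Ω}

noncomputable def horvitzThompsonTerm (μ : Measure Ω) (s : Set Ω) (f : Ω → ℝ) : Ω → ℝ :=
  fun x => s.indicator f x / μ.real s

theorem setIntegral_eq_measureReal_mul_integral_cond [IsFiniteMeasure μ] (f : Ω → ℝ) :
    ∫ x in s, f x ∂μ = μ.real s * ∫ x, f x ∂μ[|s] := by
  rw [cond, integral_smul_measure, ENNReal.toReal_inv, smul_eq_mul, ← measureReal_def]
  rcases eq_or_ne (μ s) 0 with h | h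
  · simp [Measure.restrict_eq_zero.mpr h]
  · rw [mul_inv_cancel_left₀ ((measureReal_ne_zero_iff (measure_ne_top μ s)).mpr h)]

theorem memLp_horvitzThompsonTerm {p : ℝ≥0∞} (hs : MeasurableSet s) {f g : Ω → ℝ}
    (hg : MemLp g p μ) (hfg : Set.EqOn f g s) : MemLp (horvitzThompsonTerm μ s f) p μ := by
  unfold horvitzThompsonTerm
  simp_rw [div_eq_mul_inv, Set.indicator_congr hfg]
  exact (hg.indicator hs).mul_const _

theorem integral_horvitzThompsonTerm_eq_zero [IsFiniteMeasure μ] (hs : MeasurableSet s)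
    {f g : Ω → ℝ} (hg : IntegrableOn g s μ)
    (hfg : Set.EqOn f (fun x => g x - ∫ y, g y ∂μ[|s]) s) :
    ∫ x, horvitzThompsonTerm μ s f x ∂μ = 0 := by
  simp_rw [horvitzThompsonTerm]
  rw [integral_div, Set.indicator_congr hfg, integral_indicator hs,
    integral_sub hg integrableOn_const, setIntegral_const, smul_eq_mul,
    setIntegral_eq_measureReal_mul_integral_cond, sub_self, zero_div]

theorem integral_horvitzThompsonTerm_mul_le [IsFiniteMeasure μ] (hs : MeasurableSet s)
    (ht : MeasurableSet t) (f g : Ω → ℝ) :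
    ∫ x, horvitzThompsonTerm μ s f x * horvitzThompsonTerm μ t g x ∂μ
      ≤ (μ.real t)⁻¹ * max 0 (∫ x, f x * g x ∂μ[|s ∩ t]) := by
  simp_rw [horvitzThompsonTerm, div_mul_div_comm, ← Set.inter_indicator_mul]
  rw [integral_div, integral_indicator (hs.inter ht),
    setIntegral_eq_measureReal_mul_integral_cond]
  set c := ∫ x, f x * g x ∂μ[|s ∩ t]
  have hnum : μ.real (s ∩ t) * c ≤ μ.real s * max 0 c :=
    (mul_le_mul_of_nonneg_left (le_max_right _ _) measureReal_nonneg).trans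
      (mul_le_mul_of_nonneg_right (measureReal_mono Set.inter_subset_left) (le_max_left _ _))
  calc μ.real (s ∩ t) * c / (μ.real s * μ.real t)
      ≤ μ.real s * max 0 c / (μ.real s * μ.real t) := by gcongr
    _ ≤ (μ.real t)⁻¹ * max 0 c := by
      rcases eq_or_ne (μ.real s) 0 with h | h
      · simp only [h, zero_mul, zero_div]
        exact mul_nonneg (inv_nonneg.mpr measureReal_nonneg) (le_max_left _ _)
      · rw [mul_div_mul_left _ _ h, div_eq_inv_mul]

theorem integral_sq_sum_le {ι : Type*} (S : Finset ι) {X : ι → Ω → ℝ}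
    (hX : ∀ i ∈ S, MemLp (X i) 2 μ) {c : ι → ι → ℝ}
    (hc : ∀ i ∈ S, ∀ j ∈ S, ∫ x, X i x * X j x ∂μ ≤ c i j) :
    ∫ x, (∑ i ∈ S, X i x) ^ 2 ∂μ ≤ ∑ i ∈ S, ∑ j ∈ S, c i j := by
  have hXX : ∀ i ∈ S, ∀ j ∈ S, Integrable (fun x => X i x * X j x) μ :=
    fun i hi j hj => (hX i hi).integrable_mul (hX j hj)
  simp_rw [sq, Finset.sum_mul_sum]
  rw [integral_finsetSum _ fun i hi => integrable_finsetSum _ (hXX i hi)]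
  gcongr with i hi
  rw [integral_finsetSum _ (hXX i hi)]
  gcongr with j hj
  exact hc i hi j hj

theorem integral_sq_sum_horvitzThompsonTerm_le [IsFiniteMeasure μ] {ι : Type*} (S : Finset ι)
    {A : ι → Set Ω} (hA : ∀ i, MeasurableSet (A i)) {f : ι → Ω → ℝ}
    (hf : ∀ i ∈ S, MemLp (horvitzThompsonTerm μ (A i) (f i)) 2 μ) {k : ℝ}
    (hk : ∀ i ∈ S, (μ.real (A i))⁻¹ ≤ k) :
    ∫ x, (∑ i ∈ S, horvitzThompsonTerm μ (A i) (f i) x) ^ 2 ∂μ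
      ≤ k * ∑ i ∈ S, ∑ j ∈ S, max 0 (∫ x, f i x * f j x ∂μ[|A i ∩ A j]) := by
  simp_rw [Finset.mul_sum]
  refine integral_sq_sum_le S hf fun i _ j hj => ?_
  exact (integral_horvitzThompsonTerm_mul_le (hA i) (hA j) _ _).trans
    (mul_le_mul_of_nonneg_right (hk j hj) (le_max_left _ _))

theorem variance_const_mul_sub_le [IsProbabilityMeasure μ] {X Z : Ω → ℝ} (hX : MemLp X 2 μ)
    (hZ : MemLp Z 2 μ) (r : ℝ) :
    variance (fun x => r * (X x - Z x)) μ
      ≤ r ^ 2 * (2 * ∫ x, X x ^ 2 ∂μ + 2 * ∫ x, Z x ^ 2 ∂μ) := by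
  have hX2 := hX.integrable_sq
  have hZ2 := hZ.integrable_sq
  calc variance (fun x => r * (X x - Z x)) μ ≤ ∫ x, (r * (X x - Z x)) ^ 2 ∂μ :=
        variance_le_expectation_sq (aestronglyMeasurable_const.mul (hX.1.sub hZ.1))
    _ ≤ ∫ x, r ^ 2 * (2 * X x ^ 2 + 2 * Z x ^ 2) ∂μ := by
        refine integral_mono_of_nonneg (.of_forall fun x => sq_nonneg _)
          (((hX2.const_mul 2).add (hZ2.const_mul 2)).const_mul _) (.of_forall fun x => ?_)
        dsimp only
        rw [mul_pow]
        gcongr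
        nlinarith [sq_nonneg (X x + Z x)]
    _ = r ^ 2 * (2 * ∫ x, X x ^ 2 ∂μ + 2 * ∫ x, Z x ^ 2 ∂μ) := by
        rw [integral_const_mul, integral_add (hX2.const_mul 2) (hZ2.const_mul 2),
          integral_const_mul, integral_const_mul]

end ProbabilityTheory

theorem ht_specification_error_estimator_mean_zero_variance_le_general
    {Ω : Type*} [MeasurableSpace Ω] (P : Measure Ω) [IsProbabilityMeasure P]
    {Δ : Type*} [DecidableEq Δ] [MeasurableSpace Δ] [MeasurableSingletonClass Δ]
    (n : ℕ) (d : Fin n → Ω → Δ) (Y : Fin n → Ω → ℝ)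
    (hd : ∀ i, Measurable (d i)) (hY : ∀ i, Measurable (Y i))
    (k₁ k₂ : ℝ) (hbdd : ∀ i, ∀ᵐ ω ∂P, |Y i ω| ≤ k₁)
    (a b : Δ)
    -- assignment probabilities `pᵢ(e) = P(dᵢ = e)`
    (p : Fin n → Δ → ℝ) (hp : ∀ i e, p i e = (P {ω | d i ω = e}).toReal)
    -- bounded inverse assignment probabilities for the exposures `a` and `b`
    (hk₂ : ∀ i, ∀ e ∈ ({a, b} : Set Δ), 1 / p i e ≤ k₂)
    -- conditional expected outcomes `ȳᵢ(e) = E[Yᵢ | dᵢ = e]` (zero for null events)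
    (ybar : Fin n → Δ → ℝ)
    (hybar : ∀ i e, ybar i e = ∫ ω, Y i ω ∂(P[|{ω | d i ω = e}]))
    -- specification errors `εᵢ = Yᵢ − ȳᵢ(dᵢ)`
    (ε : Fin n → Ω → ℝ)
    (hε : ∀ i ω, ε i ω = Y i ω - ybar i (d i ω))
    -- the truncated error-dependence term `D(e)`
    (D : Δ → ℝ)
    (hD : ∀ e, D e = (1 / (n : ℝ) ^ 2) * ∑ i, ∑ j,
      max 0 (∫ ω, ε i ω * ε j ω ∂(P[|{ω | d i ω = e} ∩ {ω | d j ω = e}])))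
    -- the Horvitz–Thompson estimator applied to the specification errors
    (εhat : Ω → ℝ)
    (hεhat : ∀ ω, εhat ω = (1 / (n : ℝ)) * ∑ i,
      ((if d i ω = a then ε i ω else 0) / p i a - (if d i ω = b then ε i ω else 0) / p i b)) :
    (∫ ω, εhat ω ∂P) = 0 ∧ variance εhat P ≤ 2 * k₂ * (D a + D b) := by
  have hA : ∀ e i, MeasurableSet {ω | d i ω = e} := fun e i => hd i (measurableSet_singleton e)
  have hYmem : ∀ i, MemLp (Y i) 2 P := fun i =>
    MemLp.of_bound (hY i).aestronglyMeasurable k₁ (by simpa only [Real.norm_eq_abs] using hbdd i)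
  have hε_on : ∀ e i, Set.EqOn (ε i)
      (fun ω => Y i ω - ∫ ω', Y i ω' ∂P[|{ω | d i ω = e}]) {ω | d i ω = e} :=
    fun e i ω hω => by rw [hε, Set.mem_ofPred_eq.mp hω, hybar]
  set T : Δ → Fin n → Ω → ℝ := fun e i => horvitzThompsonTerm P {ω | d i ω = e} (ε i)
  have hεhat_eq : εhat = fun ω => 1 / (n : ℝ) * (∑ i, T a i ω - ∑ i, T b i ω) := by
    ext ω
    simp only [hεhat, T, horvitzThompsonTerm, hp, measureReal_def, ← Finset.sum_sub_distrib,
      Set.indicator_apply, Set.mem_ofPred_eq]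
  have hTmem : ∀ e i, MemLp (T e i) 2 P := fun e i =>
    memLp_horvitzThompsonTerm (hA e i) ((hYmem i).sub (memLp_const _)) (hε_on e i)
  have hTint : ∀ e i, Integrable (T e i) P := fun e i => (hTmem e i).integrable one_le_two
  have hT_mean : ∀ e i, ∫ ω, T e i ω ∂P = 0 := fun e i =>
    integral_horvitzThompsonTerm_eq_zero (hA e i) ((hYmem i).integrable one_le_two).integrableOn
      (hε_on e i)
  have hsq : ∀ e ∈ ({a, b} : Set Δ), ∫ ω, (∑ i, T e i ω) ^ 2 ∂P ≤ k₂ * ∑ i, ∑ j,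
      max 0 (∫ ω, ε i ω * ε j ω ∂(P[|{ω | d i ω = e} ∩ {ω | d j ω = e}])) := fun e he =>
    integral_sq_sum_horvitzThompsonTerm_le _ (hA e) (fun i _ => hTmem e i) fun i _ => by
      simpa only [hp, one_div, ← measureReal_def] using hk₂ i e he
  constructor
  · rw [hεhat_eq, integral_const_mul, integral_sub (integrable_finsetSum _ fun i _ => hTint a i)
      (integrable_finsetSum _ fun i _ => hTint b i), integral_finsetSum _ fun i _ => hTint a i,
      integral_finsetSum _ fun i _ => hTint b i]
    simp only [hT_mean, Finset.sum_const_zero, sub_self, mul_zero]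
  · rw [hεhat_eq, hD, hD]
    refine (variance_const_mul_sub_le (memLp_finsetSum _ fun i _ => hTmem a i)
      (memLp_finsetSum _ fun i _ => hTmem b i) _).trans ?_
    have hab := add_le_add (mul_le_mul_of_nonneg_left (hsq a (by simp)) zero_le_two)
      (mul_le_mul_of_nonneg_left (hsq b (by simp)) zero_le_two)
    exact (mul_le_mul_of_nonneg_left hab (sq_nonneg _)).trans_eq (by ring)

/-- The Horvitz–Thompson estimator applied to the specification errors has expectation
zero and its variance is bounded by `2k₂(D(a) + D(b))`, where
`D(e) = (1/n²)ΣᵢΣⱼ [E[εᵢεⱼ | dᵢ = e, dⱼ = e]]⁺`. -/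
theorem ht_specification_error_estimator_mean_zero_variance_le
    {Ω : Type*} [MeasurableSpace Ω] (P : Measure Ω) [IsProbabilityMeasure P]
    {Δ : Type*} [Fintype Δ] [DecidableEq Δ] [MeasurableSpace Δ] [MeasurableSingletonClass Δ]
    (n : ℕ) (d : Fin n → Ω → Δ) (Y : Fin n → Ω → ℝ)
    (hd : ∀ i, Measurable (d i)) (hY : ∀ i, Measurable (Y i))
    (k₁ k₂ : ℝ) (hbdd : ∀ i, ∀ᵐ ω ∂P, |Y i ω| ≤ k₁)
    (a b : Δ)
    -- assignment probabilities `pᵢ(e) = P(dᵢ = e)`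
    (p : Fin n → Δ → ℝ) (hp : ∀ i e, p i e = (P {ω | d i ω = e}).toReal)
    -- bounded inverse assignment probabilities for the exposures `a` and `b`
    (hk₂ : ∀ i, ∀ e ∈ ({a, b} : Set Δ), 1 / p i e ≤ k₂)
    -- joint positivity for the exposures `a` and `b`, for all pairs of units
    (hpos : ∀ i j : Fin n, ∀ e ∈ ({a, b} : Set Δ),
      0 < P ({ω | d i ω = e} ∩ {ω | d j ω = e}))
    -- conditional expected outcomes `ȳᵢ(e) = E[Yᵢ | dᵢ = e]` (zero for null events)
    (ybar : Fin n → Δ → ℝ)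
    (hybar : ∀ i e, ybar i e = ∫ ω, Y i ω ∂(P[|{ω | d i ω = e}]))
    -- specification errors `εᵢ = Yᵢ − ȳᵢ(dᵢ)`
    (ε : Fin n → Ω → ℝ)
    (hε : ∀ i ω, ε i ω = Y i ω - ybar i (d i ω))
    -- the truncated error-dependence term `D(e)`
    (D : Δ → ℝ)
    (hD : ∀ e, D e = (1 / (n : ℝ) ^ 2) * ∑ i, ∑ j,
      max 0 (∫ ω, ε i ω * ε j ω ∂(P[|{ω | d i ω = e} ∩ {ω | d j ω = e}])))
    -- the Horvitz–Thompson estimator applied to the specification errors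
    (εhat : Ω → ℝ)
    (hεhat : ∀ ω, εhat ω = (1 / (n : ℝ)) * ∑ i,
      ((if d i ω = a then ε i ω else 0) / p i a - (if d i ω = b then ε i ω else 0) / p i b)) :
    (∫ ω, εhat ω ∂P) = 0 ∧ variance εhat P ≤ 2 * k₂ * (D a + D b) :=
  ht_specification_error_estimator_mean_zero_variance_le_general P n d Y hd hY k₁ k₂ hbdd a b p hp
    hk₂ ybar hybar ε hε D hD εhat hεhat
end

section
/- Suppose |Yᵢ| ≤ k₁ almost surely for all i, and let p ≥ 1 be a real number. With zᵢ(e) = 1{pᵢ(e) = 0}, wᵢ(e) = (1 − zᵢ(e))/(pᵢ(e) + zᵢ(e)), and μ_p(e) = [(1/n)Σᵢ wᵢ(e)^p]^{1/p}, one has (4/n²)Σᵢ wᵢ(e)²·Var(1{dᵢ=e}Yᵢ) ≤ 4k₁²·μ_p(e)/n. -/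
open MeasureTheory ProbabilityTheory Real Finset

/-!
The truncated weight `wᵢ(e)` is exactly `pᵢ(e)⁻¹` with the convention `0⁻¹ = 0`. Since
`1{dᵢ=e}Yᵢ` is bounded by `k₁` and vanishes off `{dᵢ = e}`, its variance is at most `k₁² pᵢ(e)`,
so each summand is at most `k₁² wᵢ(e)`. The arithmetic mean of the weights is then bounded by
their `q`-power mean `μ_q(e)`.
-/

theorem inv_sq_mul_self {G₀ : Type*} [CommGroupWithZero G₀] (a : G₀) : a⁻¹ ^ 2 * a = a⁻¹ := by
  simpa [sq] using mul_self_mul_inv a⁻¹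

theorem one_sub_ite_div_add_ite_eq_inv {K : Type*} [DivisionRing K] [DecidableEq K] (a : K) :
    (1 - if a = 0 then 1 else 0) / (a + if a = 0 then 1 else 0) = a⁻¹ := by
  split_ifs with ha <;> simp [ha]

theorem ProbabilityTheory.variance_indicator_le {Ω : Type*} [MeasurableSpace Ω]
    {P : Measure Ω} [IsProbabilityMeasure P] {s : Set Ω} (hs : MeasurableSet s) {X : Ω → ℝ}
    (hX : AEStronglyMeasurable X P) {c : ℝ} (hc : ∀ᵐ ω ∂P, |X ω| ≤ c) :
    variance (s.indicator X) P ≤ c ^ 2 * P.real s :=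
  calc variance (s.indicator X) P
      ≤ ∫ ω, (s.indicator X) ω ^ 2 ∂P := variance_le_expectation_sq (hX.indicator hs)
    _ ≤ ∫ ω, s.indicator (fun _ => c ^ 2) ω ∂P := by
        refine integral_mono_of_nonneg (.of_forall fun ω => sq_nonneg _)
          ((integrable_const _).indicator hs) ?_
        filter_upwards [hc] with ω hω
        by_cases hω' : ω ∈ s
        · simpa [hω'] using sq_le_sq' (neg_le_of_abs_le hω) (le_of_abs_le hω)
        · simp [hω']
    _ = c ^ 2 * P.real s := by rw [integral_indicator_const _ hs, smul_eq_mul, mul_comm]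

theorem Real.sum_div_card_le_rpow_mean {ι : Type*} (s : Finset ι) {f : ι → ℝ}
    (hf : ∀ i ∈ s, 0 ≤ f i) {q : ℝ} (hq : 1 ≤ q) :
    (∑ i ∈ s, f i) / #s ≤ ((∑ i ∈ s, f i ^ q) / #s) ^ (1 / q) := by
  rcases s.eq_empty_or_nonempty with rfl | hs
  · simp [Real.rpow_nonneg]
  have hcard : (0 : ℝ) < #s := by exact_mod_cast hs.card_pos
  simpa [← Finset.sum_div, div_eq_inv_mul, Finset.mul_sum] using
    arith_mean_le_rpow_mean s (fun _ => (#s : ℝ)⁻¹) f (fun _ _ => by positivity)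
      (by simp [hcard.ne']) hf hq

theorem first_variance_term_bound_without_positivity_general
    {Ω : Type*} [MeasurableSpace Ω] (P : Measure Ω) [IsProbabilityMeasure P]
    {Δ : Type*} [DecidableEq Δ] [MeasurableSpace Δ] [MeasurableSingletonClass Δ]
    (n : ℕ) (d : Fin n → Ω → Δ) (Y : Fin n → Ω → ℝ)
    (hd : ∀ i, Measurable (d i)) (hY : ∀ i, Measurable (Y i))
    (k₁ : ℝ) (hbdd : ∀ i, ∀ᵐ ω ∂P, |Y i ω| ≤ k₁)
    (q : ℝ) (hq : 1 ≤ q) (e : Δ)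
    -- assignment probabilities `pᵢ(e) = P(dᵢ = e)`
    (p : Fin n → Δ → ℝ) (hp : ∀ i e, p i e = (P {ω | d i ω = e}).toReal)
    -- indicators of zero-probability assignments `zᵢ(e) = 1{pᵢ(e) = 0}`
    (z : Fin n → Δ → ℝ) (hz : ∀ i e, z i e = if p i e = 0 then 1 else 0)
    -- truncated inverse assignment probabilities `wᵢ(e) = (1 − zᵢ(e))/(pᵢ(e) + zᵢ(e))`
    (w : Fin n → Δ → ℝ) (hw : ∀ i e, w i e = (1 - z i e) / (p i e + z i e))
    -- the moment `μ_q(e) = [(1/n)Σᵢ wᵢ(e)^q]^{1/q}`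
    (μ : Δ → ℝ) (hμ : ∀ e, μ e = ((1 / (n : ℝ)) * ∑ i, (w i e) ^ q) ^ (1 / q)) :
    (4 / (n : ℝ) ^ 2) * ∑ i, (w i e) ^ 2
        * variance (fun ω => if d i ω = e then Y i ω else 0) P
      ≤ 4 * k₁ ^ 2 * μ e / n := by
  have hw_inv : ∀ i, w i e = (p i e)⁻¹ := fun i => by
    rw [hw, hz, one_sub_ite_div_add_ite_eq_inv]
  have hp_nonneg : ∀ i, 0 ≤ p i e := fun i => by rw [hp]; exact ENNReal.toReal_nonneg
  have hvar : ∀ i, variance (fun ω => if d i ω = e then Y i ω else 0) P ≤ k₁ ^ 2 * p i e := by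
    intro i
    have hind : (fun ω => if d i ω = e then Y i ω else 0) = {ω | d i ω = e}.indicator (Y i) := by
      ext ω; simp [Set.indicator_apply]
    rw [hind, hp]
    exact variance_indicator_le (hd i (measurableSet_singleton e))
      (hY i).aestronglyMeasurable (hbdd i)
  have hmean : (∑ i, w i e) / n ≤ μ e := by
    rw [hμ, one_div_mul_eq_div]
    simpa using Real.sum_div_card_le_rpow_mean univ (f := fun i => w i e)
      (fun i _ => by rw [hw_inv]; exact inv_nonneg.2 (hp_nonneg i)) hq
  calc (4 / (n : ℝ) ^ 2) * ∑ i, (w i e) ^ 2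
        * variance (fun ω => if d i ω = e then Y i ω else 0) P
      ≤ (4 / (n : ℝ) ^ 2) * ∑ i, k₁ ^ 2 * w i e := by
        gcongr _ * ∑ i, ?_ with i
        calc w i e ^ 2 * variance (fun ω => if d i ω = e then Y i ω else 0) P
            ≤ w i e ^ 2 * (k₁ ^ 2 * p i e) := by gcongr; exact hvar i
          _ = k₁ ^ 2 * w i e := by rw [hw_inv, mul_left_comm, inv_sq_mul_self]
    _ = 4 * k₁ ^ 2 / n * ((∑ i, w i e) / n) := by
        rw [← Finset.mul_sum]; ring
    _ ≤ 4 * k₁ ^ 2 / n * μ e := by gcongr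
    _ = 4 * k₁ ^ 2 * μ e / n := by ring

/-- With truncated inverse assignment probabilities `wᵢ(e) = (1 − zᵢ(e))/(pᵢ(e) + zᵢ(e))`
and `μ_p(e) = [(1/n)Σᵢ wᵢ(e)^p]^{1/p}` for a real `p ≥ 1`, if `|Yᵢ| ≤ k₁` a.s. then
`(4/n²)Σᵢ wᵢ(e)²·Var(1{dᵢ=e}Yᵢ) ≤ 4k₁²·μ_p(e)/n`. -/
theorem first_variance_term_bound_without_positivity
    {Ω : Type*} [MeasurableSpace Ω] (P : Measure Ω) [IsProbabilityMeasure P]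
    {Δ : Type*} [Fintype Δ] [DecidableEq Δ] [MeasurableSpace Δ] [MeasurableSingletonClass Δ]
    (n : ℕ) (d : Fin n → Ω → Δ) (Y : Fin n → Ω → ℝ)
    (hd : ∀ i, Measurable (d i)) (hY : ∀ i, Measurable (Y i))
    (k₁ : ℝ) (hbdd : ∀ i, ∀ᵐ ω ∂P, |Y i ω| ≤ k₁)
    (q : ℝ) (hq : 1 ≤ q) (e : Δ)
    -- assignment probabilities `pᵢ(e) = P(dᵢ = e)`
    (p : Fin n → Δ → ℝ) (hp : ∀ i e, p i e = (P {ω | d i ω = e}).toReal)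
    -- indicators of zero-probability assignments `zᵢ(e) = 1{pᵢ(e) = 0}`
    (z : Fin n → Δ → ℝ) (hz : ∀ i e, z i e = if p i e = 0 then 1 else 0)
    -- truncated inverse assignment probabilities `wᵢ(e) = (1 − zᵢ(e))/(pᵢ(e) + zᵢ(e))`
    (w : Fin n → Δ → ℝ) (hw : ∀ i e, w i e = (1 - z i e) / (p i e + z i e))
    -- the moment `μ_q(e) = [(1/n)Σᵢ wᵢ(e)^q]^{1/q}`
    (μ : Δ → ℝ) (hμ : ∀ e, μ e = ((1 / (n : ℝ)) * ∑ i, (w i e) ^ q) ^ (1 / q)) :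
    (4 / (n : ℝ) ^ 2) * ∑ i, (w i e) ^ 2
        * variance (fun ω => if d i ω = e then Y i ω else 0) P
      ≤ 4 * k₁ ^ 2 * μ e / n :=
  first_variance_term_bound_without_positivity_general P n d Y hd hY k₁ hbdd q hq e p hp z hz w hw μ
    hμ
end

section
/- Let p > 2 be a real number, n ≥ 1, and let w₁, …, w_n ≥ 0, a₁, …, a_n ∈ ℝ with |aᵢ| ≤ k for all i, and c_{ij} ∈ ℝ for i ≠ j. Then (4/n²)ΣᵢΣ_{j≠i} wᵢ aᵢ wⱼ aⱼ c_{ij} ≤ 4k²·[(1/n)Σᵢ wᵢ^p]^{2/p}·[(1/n²)ΣᵢΣ_{j≠i} |c_{ij}|^{p/(p−2)}]^{(p−2)/p}. -/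
open Finset

/-! Bounding `|aᵢ aⱼ|` by `k²` reduces the claim to `Σ_{i≠j} wᵢwⱼ|c_{ij}|`, to which Hölder's
inequality with the conjugate exponents `p/2` and `p/(p-2)` applies on the off-diagonal pairs.
The `p/2`-moment of the products `wᵢwⱼ` is then at most `(Σᵢ wᵢ^{p/2})² ≤ n Σᵢ wᵢ^p` by
Cauchy–Schwarz, and Hölder's inequality survives dividing every sum by the same `n²` because
`1/(p/2) + 1/(p/(p-2)) = 1`. -/

namespace Finset

variable {ι : Type*} [DecidableEq ι]

theorem sum_offDiag_eq_sum_sum_erase {M : Type*} [AddCommMonoid M] (s : Finset ι)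
    (f : ι → ι → M) : ∑ x ∈ s.offDiag, f x.1 x.2 = ∑ i ∈ s, ∑ j ∈ s.erase i, f i j :=
  sum_finset_product' _ _ _ fun x => by simp [mem_offDiag, and_comm, ne_comm]

theorem sum_offDiag_mul_le_card_mul_sum_sq (s : Finset ι) (f : ι → ℝ) :
    ∑ x ∈ s.offDiag, f x.1 * f x.2 ≤ #s * ∑ i ∈ s, f i ^ 2 := by
  have hsplit : (∑ i ∈ s, f i) ^ 2 = ∑ i ∈ s, f i ^ 2 + ∑ x ∈ s.offDiag, f x.1 * f x.2 := by
    rw [sq, sum_mul_sum, ← sum_product', ← diag_union_offDiag,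
      sum_union (disjoint_diag_offDiag s), sum_diag]
    simp only [sq]
  have hdiag : 0 ≤ ∑ i ∈ s, f i ^ 2 := sum_nonneg fun i _ => sq_nonneg (f i)
  linarith [sq_sum_le_card_mul_sum_sq (s := s) (f := f)]

end Finset

namespace Real

variable {ι : Type*}

theorem inner_div_le_Lp_div_mul_Lq_div_of_nonneg {s : Finset ι} {f g : ι → ℝ} {p q t : ℝ}
    (hpq : p.HolderConjugate q) (ht : 0 ≤ t) (hf : ∀ i ∈ s, 0 ≤ f i) (hg : ∀ i ∈ s, 0 ≤ g i) :
    (∑ i ∈ s, f i * g i) / t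
      ≤ ((∑ i ∈ s, f i ^ p) / t) ^ (1 / p) * ((∑ i ∈ s, g i ^ q) / t) ^ (1 / q) := by
  have hfp : 0 ≤ ∑ i ∈ s, f i ^ p := sum_nonneg fun i hi => rpow_nonneg (hf i hi) p
  have hgq : 0 ≤ ∑ i ∈ s, g i ^ q := sum_nonneg fun i hi => rpow_nonneg (hg i hi) q
  have ht_split : t ^ (1 / p) * t ^ (1 / q) = t := by
    rw [← rpow_add' ht (by rw [hpq.one_div_add_one_div]; norm_num), hpq.one_div_add_one_div, div_one,
      rpow_one]
  rw [div_rpow hfp ht, div_rpow hgq ht, div_mul_div_comm, ht_split]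
  exact div_le_div_of_nonneg_right (inner_le_Lp_mul_Lq_of_nonneg s hpq hf hg) ht

end Real

open Real in
theorem sum_offDiag_mul_abs_div_le {ι : Type*} [DecidableEq ι] (s : Finset ι) {p : ℝ}
    (hp : 2 < p) {w : ι → ℝ} (hw : ∀ i, 0 ≤ w i) (c : ι → ι → ℝ) :
    (∑ x ∈ s.offDiag, w x.1 * w x.2 * |c x.1 x.2|) / #s ^ 2
      ≤ ((∑ i ∈ s, w i ^ p) / #s) ^ (2 / p)
        * ((∑ x ∈ s.offDiag, |c x.1 x.2| ^ (p / (p - 2))) / #s ^ 2) ^ ((p - 2) / p) := by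
  have hpq : (p / 2).HolderConjugate (p / (p - 2)) := by
    rw [holderConjugate_iff]
    refine ⟨by linarith, ?_⟩
    field_simp
    ring
  have hmoment : (∑ x ∈ s.offDiag, (w x.1 * w x.2) ^ (p / 2)) / #s ^ 2
      ≤ (∑ i ∈ s, w i ^ p) / #s := by
    have hsq : ∀ i, (w i ^ (p / 2)) ^ 2 = w i ^ p := fun i => by
      rw [← rpow_natCast, ← rpow_mul (hw i)]
      norm_num
    have h := sum_offDiag_mul_le_card_mul_sum_sq s fun i => w i ^ (p / 2)
    simp only [hsq, ← mul_rpow (hw _) (hw _)] at h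
    calc (∑ x ∈ s.offDiag, (w x.1 * w x.2) ^ (p / 2)) / #s ^ 2
        ≤ #s * (∑ i ∈ s, w i ^ p) / #s ^ 2 := by gcongr
      _ = (∑ i ∈ s, w i ^ p) / #s := by
        rcases (#s).eq_zero_or_pos with hs | hs
        · simp [hs]
        · field_simp
  have hholder := inner_div_le_Lp_div_mul_Lq_div_of_nonneg (s := s.offDiag)
    (f := fun x => w x.1 * w x.2) (g := fun x => |c x.1 x.2|) (t := (#s : ℝ) ^ 2) hpq
    (by positivity) (fun x _ => mul_nonneg (hw _) (hw _)) (fun x _ => abs_nonneg _)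
  rw [one_div_div, one_div_div] at hholder
  refine hholder.trans ?_
  gcongr
  exact div_nonneg (sum_nonneg fun x _ => rpow_nonneg (mul_nonneg (hw _) (hw _)) _) (by positivity)

theorem mul_mul_mul_mul_le_sq_mul_abs {u v a b c k : ℝ} (hu : 0 ≤ u) (hv : 0 ≤ v)
    (ha : |a| ≤ k) (hb : |b| ≤ k) : u * a * v * b * c ≤ k ^ 2 * (u * v * |c|) :=
  calc u * a * v * b * c ≤ |u * a * v * b * c| := le_abs_self _
    _ = u * v * |c| * (|a| * |b|) := by
      simp only [abs_mul, abs_of_nonneg hu, abs_of_nonneg hv]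
      ring
    _ ≤ u * v * |c| * (k * k) := by
      gcongr
      · exact (abs_nonneg a).trans ha
    _ = k ^ 2 * (u * v * |c|) := by ring

theorem holder_design_dependence_bound_general
    (p : ℝ) (hp : 2 < p) (n : ℕ)
    (w : Fin n → ℝ) (hw : ∀ i, 0 ≤ w i)
    (k : ℝ) (a : Fin n → ℝ) (ha : ∀ i, |a i| ≤ k)
    (c : Fin n → Fin n → ℝ) :
    (4 / (n : ℝ) ^ 2) * ∑ i, ∑ j ∈ Finset.univ.erase i, w i * a i * w j * a j * c i j
      ≤ 4 * k ^ 2 * ((1 / (n : ℝ)) * ∑ i, w i ^ p) ^ (2 / p)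
          * ((1 / (n : ℝ) ^ 2) * ∑ i, ∑ j ∈ Finset.univ.erase i,
              |c i j| ^ (p / (p - 2))) ^ ((p - 2) / p) := by
  have hcard : (#(univ : Finset (Fin n)) : ℝ) = n := by rw [card_univ, Fintype.card_fin]
  have hpairs := sum_offDiag_mul_abs_div_le univ hp hw c
  rw [hcard, sum_offDiag_eq_sum_sum_erase univ fun i j => w i * w j * |c i j|,
    sum_offDiag_eq_sum_sum_erase univ fun i j => |c i j| ^ (p / (p - 2))] at hpairs
  calc (4 / (n : ℝ) ^ 2) * ∑ i, ∑ j ∈ univ.erase i, w i * a i * w j * a j * c i j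
      = 4 * ((∑ i, ∑ j ∈ univ.erase i, w i * a i * w j * a j * c i j) / n ^ 2) := by ring
    _ ≤ 4 * ((∑ i, ∑ j ∈ univ.erase i, k ^ 2 * (w i * w j * |c i j|)) / n ^ 2) := by
      gcongr 4 * ((∑ i, ∑ j ∈ _, ?_) / _) with i _ j _
      exact mul_mul_mul_mul_le_sq_mul_abs (hw i) (hw j) (ha i) (ha j)
    _ = 4 * k ^ 2 * ((∑ i, ∑ j ∈ univ.erase i, w i * w j * |c i j|) / n ^ 2) := by
      simp only [← mul_sum]
      ring
    _ ≤ _ := by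
      rw [one_div_mul_eq_div, one_div_mul_eq_div, mul_assoc _ (_ ^ (2 / p))]
      gcongr

/-- Hölder-type inequality used to bound the design-dependence term of the variance of the
Horvitz–Thompson estimator without positivity: for `p > 2`, nonnegative weights `wᵢ`,
values `aᵢ` with `|aᵢ| ≤ k`, and arbitrary `c_{ij}`,
`(4/n²)ΣᵢΣ_{j≠i} wᵢaᵢwⱼaⱼc_{ij}
  ≤ 4k²·[(1/n)Σᵢ wᵢ^p]^{2/p}·[(1/n²)ΣᵢΣ_{j≠i}|c_{ij}|^{p/(p−2)}]^{(p−2)/p}`. -/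
theorem holder_design_dependence_bound
    (p : ℝ) (hp : 2 < p) (n : ℕ) (hn : 1 ≤ n)
    (w : Fin n → ℝ) (hw : ∀ i, 0 ≤ w i)
    (k : ℝ) (a : Fin n → ℝ) (ha : ∀ i, |a i| ≤ k)
    (c : Fin n → Fin n → ℝ) :
    (4 / (n : ℝ) ^ 2) * ∑ i, ∑ j ∈ Finset.univ.erase i, w i * a i * w j * a j * c i j
      ≤ 4 * k ^ 2 * ((1 / (n : ℝ)) * ∑ i, w i ^ p) ^ (2 / p)
          * ((1 / (n : ℝ) ^ 2) * ∑ i, ∑ j ∈ Finset.univ.erase i,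
              |c i j| ^ (p / (p - 2))) ^ ((p - 2) / p) :=
  holder_design_dependence_bound_general p hp n w hw k a ha c
end

section
/- Let n ≥ 1 and let yᵢᵃ, yᵢᵇ ∈ ℝ for i = 1, …, n, and let z_{ij}(e₁,e₂) ∈ {0,1} for i ≠ j and e₁, e₂ ∈ {a,b} satisfy the symmetry z_{ij}(e₁,e₂) = z_{ji}(e₂,e₁). Define τ̄ = (1/n)Σᵢ (yᵢᵃ − yᵢᵇ), B₁ = (1/n²)Σᵢ (yᵢᵃ − yᵢᵇ)², and B₂(e₁,e₂) = (1/(2n²))ΣᵢΣ_{j≠i} [z_{ij}(e₁,e₁)(yᵢ^{e₁} + yⱼ^{e₁})² + z_{ij}(e₁,e₂)(yᵢ^{e₁} − yⱼ^{e₂})²]. Then B₁ + B₂(a,b) + B₂(b,a) − τ̄² = (1/n²)ΣᵢΣ_{j≠i}[z_{ij}(a,a) + z_{ij}(a,b)](yᵢᵃ)² − (1/n²)ΣᵢΣ_{j≠i}(1 − z_{ij}(a,a))yᵢᵃyⱼᵃ + (1/n²)ΣᵢΣ_{j≠i}[z_{ij}(b,a) + z_{ij}(b,b)](yᵢᵇ)²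 − (1/n²)ΣᵢΣ_{j≠i}(1 − z_{ij}(b,b))yᵢᵇyⱼᵇ + (2/n²)ΣᵢΣ_{j≠i}(1 − z_{ij}(a,b))yᵢᵃyⱼᵇ. -/
open Finset

private lemma swap2 {n : ℕ} (f : Fin n → Fin n → ℝ) :
    ∑ i, ∑ j ∈ Finset.univ.erase i, f i j = ∑ i, ∑ j ∈ Finset.univ.erase i, f j i := by
  rw [Finset.sum_comm' (t' := (Finset.univ : Finset (Fin n)))
    (s' := fun j => Finset.univ.erase j)]
  intro x y
  simp [Finset.mem_erase, ne_comm, eq_comm]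

private lemma antisym_sum_zero {n : ℕ} (D : Fin n → Fin n → ℝ)
    (h : ∀ i j, i ≠ j → D i j = -D j i) :
    ∑ i, ∑ j ∈ Finset.univ.erase i, D i j = 0 := by
  have h1 := swap2 D
  have h2 : ∑ i, ∑ j ∈ Finset.univ.erase i, D j i
      = ∑ i, ∑ j ∈ Finset.univ.erase i, -D i j := by
    refine Finset.sum_congr rfl fun i _ => Finset.sum_congr rfl fun j hj => ?_
    have hji : j ≠ i := (Finset.mem_erase.mp hj).1
    rw [h j i hji]
  rw [h2] at h1
  simp only [Finset.sum_neg_distrib] at h1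
  linarith




/-- Deterministic algebraic identity used in computing the expectation of the variance
estimator of the Horvitz–Thompson estimator.  Here `ya i`, `yb i` play the role of the
expected potential outcomes `ȳᵢ(a)`, `ȳᵢ(b)`, and `zaa`, `zab`, `zba`, `zbb` the role of
the indicators `z_{ij}(e₁,e₂) = 1{P(dᵢ = e₁, dⱼ = e₂) = 0}` for `e₁, e₂ ∈ {a, b}`,
which satisfy the symmetry `z_{ij}(e₁,e₂) = z_{ji}(e₂,e₁)`. -/
theorem variance_estimator_bias_algebraic_identity
    (n : ℕ) (hn : 1 ≤ n)
    (ya yb : Fin n → ℝ)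
    (zaa zab zba zbb : Fin n → Fin n → ℝ)
    -- the indicators take values in {0, 1}
    (hzaa01 : ∀ i j : Fin n, i ≠ j → zaa i j = 0 ∨ zaa i j = 1)
    (hzab01 : ∀ i j : Fin n, i ≠ j → zab i j = 0 ∨ zab i j = 1)
    (hzba01 : ∀ i j : Fin n, i ≠ j → zba i j = 0 ∨ zba i j = 1)
    (hzbb01 : ∀ i j : Fin n, i ≠ j → zbb i j = 0 ∨ zbb i j = 1)
    -- symmetry `z_{ij}(e₁,e₂) = z_{ji}(e₂,e₁)`
    (hzaa : ∀ i j : Fin n, i ≠ j → zaa i j = zaa j i)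
    (hzbb : ∀ i j : Fin n, i ≠ j → zbb i j = zbb j i)
    (hzab : ∀ i j : Fin n, i ≠ j → zab i j = zba j i)
    -- the estimand `τ̄`
    (τbar : ℝ) (hτbar : τbar = (1 / (n : ℝ)) * ∑ i, (ya i - yb i))
    -- `B₁ = (1/n²)Σᵢ (yᵢᵃ − yᵢᵇ)²`
    (B₁ : ℝ) (hB₁ : B₁ = (1 / (n : ℝ) ^ 2) * ∑ i, (ya i - yb i) ^ 2)
    -- `B₂(a,b)` and `B₂(b,a)`
    (B₂ab : ℝ) (hB₂ab : B₂ab = (1 / (2 * (n : ℝ) ^ 2)) * ∑ i, ∑ j ∈ Finset.univ.erase i,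
      (zaa i j * (ya i + ya j) ^ 2 + zab i j * (ya i - yb j) ^ 2))
    (B₂ba : ℝ) (hB₂ba : B₂ba = (1 / (2 * (n : ℝ) ^ 2)) * ∑ i, ∑ j ∈ Finset.univ.erase i,
      (zbb i j * (yb i + yb j) ^ 2 + zba i j * (yb i - ya j) ^ 2)) :
    B₁ + B₂ab + B₂ba - τbar ^ 2
      = (1 / (n : ℝ) ^ 2) * (∑ i, ∑ j ∈ Finset.univ.erase i,
            (zaa i j + zab i j) * (ya i) ^ 2)
        - (1 / (n : ℝ) ^ 2) * (∑ i, ∑ j ∈ Finset.univ.erase i,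
            (1 - zaa i j) * (ya i * ya j))
        + (1 / (n : ℝ) ^ 2) * (∑ i, ∑ j ∈ Finset.univ.erase i,
            (zba i j + zbb i j) * (yb i) ^ 2)
        - (1 / (n : ℝ) ^ 2) * (∑ i, ∑ j ∈ Finset.univ.erase i,
            (1 - zbb i j) * (yb i * yb j))
        + (2 / (n : ℝ) ^ 2) * (∑ i, ∑ j ∈ Finset.univ.erase i,
            (1 - zab i j) * (ya i * yb j)) := by
  
  -- abbreviations for the various double sums
  set P := ∑ i, (ya i - yb i) ^ 2 with hP
  set Scross := ∑ i, ∑ j ∈ Finset.univ.erase i, (ya i - yb i) * (ya j - yb j) with hScross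
  set Sab := ∑ i, ∑ j ∈ Finset.univ.erase i,
      (zaa i j * (ya i + ya j) ^ 2 + zab i j * (ya i - yb j) ^ 2) with hSab
  set Sba := ∑ i, ∑ j ∈ Finset.univ.erase i,
      (zbb i j * (yb i + yb j) ^ 2 + zba i j * (yb i - ya j) ^ 2) with hSba
  set T1 := ∑ i, ∑ j ∈ Finset.univ.erase i, (zaa i j + zab i j) * (ya i) ^ 2 with hT1
  set T2 := ∑ i, ∑ j ∈ Finset.univ.erase i, (1 - zaa i j) * (ya i * ya j) with hT2
  set T3 := ∑ i, ∑ j ∈ Finset.univ.erase i, (zba i j + zbb i j) * (yb i) ^ 2 with hT3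
  set T4 := ∑ i, ∑ j ∈ Finset.univ.erase i, (1 - zbb i j) * (yb i * yb j) with hT4
  set T5 := ∑ i, ∑ j ∈ Finset.univ.erase i, (1 - zab i j) * (ya i * yb j) with hT5
  -- expansion of the square of the sum
  have hS : (∑ i, (ya i - yb i)) ^ 2 = P + Scross := by
    rw [sq, Finset.sum_mul_sum, hP, hScross, ← Finset.sum_add_distrib]
    refine Finset.sum_congr rfl fun i _ => ?_
    rw [show (ya i - yb i) ^ 2 = (ya i - yb i) * (ya i - yb i) from sq (ya i - yb i) ▸ rfl]
    exact (Finset.add_sum_erase _ _ (Finset.mem_univ i)).symm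
  -- the key purely combinatorial identity
  have h0 : ∑ i, ∑ j ∈ Finset.univ.erase i,
      ((zaa i j * (ya i + ya j) ^ 2 + zab i j * (ya i - yb j) ^ 2)
        + (zbb i j * (yb i + yb j) ^ 2 + zba i j * (yb i - ya j) ^ 2)
        - 2 * ((ya i - yb i) * (ya j - yb j))
        - 2 * ((zaa i j + zab i j) * (ya i) ^ 2)
        + 2 * ((1 - zaa i j) * (ya i * ya j))
        - 2 * ((zba i j + zbb i j) * (yb i) ^ 2)
        + 2 * ((1 - zbb i j) * (yb i * yb j))
        - 4 * ((1 - zab i j) * (ya i * yb j))) = 0 := by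
    refine antisym_sum_zero _ fun i j hij => ?_
    have e1 := hzaa i j hij
    have e2 := hzbb i j hij
    have e3 := hzab i j hij
    have e4 := hzab j i hij.symm
    rw [← e1, ← e2, e4, ← e3]
    ring
  have hdist : ∑ i, ∑ j ∈ Finset.univ.erase i,
      ((zaa i j * (ya i + ya j) ^ 2 + zab i j * (ya i - yb j) ^ 2)
        + (zbb i j * (yb i + yb j) ^ 2 + zba i j * (yb i - ya j) ^ 2)
        - 2 * ((ya i - yb i) * (ya j - yb j))
        - 2 * ((zaa i j + zab i j) * (ya i) ^ 2)
        + 2 * ((1 - zaa i j) * (ya i * ya j))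
        - 2 * ((zba i j + zbb i j) * (yb i) ^ 2)
        + 2 * ((1 - zbb i j) * (yb i * yb j))
        - 4 * ((1 - zab i j) * (ya i * yb j)))
      = Sab + Sba - 2 * Scross - 2 * T1 + 2 * T2 - 2 * T3 + 2 * T4 - 4 * T5 := by
    simp only [hSab, hSba, hScross, hT1, hT2, hT3, hT4, hT5, Finset.mul_sum,
      ← Finset.sum_sub_distrib, ← Finset.sum_add_distrib]
  have key2 : Sab + Sba - 2 * Scross - 2 * T1 + 2 * T2 - 2 * T3 + 2 * T4 - 4 * T5 = 0 := by
    rw [← hdist]; exact h0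
  rw [hτbar, hB₁, hB₂ab, hB₂ba]
  linear_combination (1 / (2 * (n : ℝ) ^ 2)) * key2 - (1 / (n : ℝ) ^ 2) * hS
end
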